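/- arXiv:1008.3821 — 3 statements merged into one kernel-verified Lean document; each statement's English description precedes it below -/
import Mathlib

section
/- An n-gon in which two non-adjacent vertices coincide can always be enlarged: let n ≥ 4 and z₁,…,zₙ ∈ ℍ with all sidelengths positive (d(z_k,z_{k+1}) > 0 for k = 1,…,n, indices mod n), and suppose z_j = z_m for some indices j ≠ m that are non-adjacent in the cyclic order (m ≢ j±1 mod n). Then there exists an n-gon w₁,…,wₙ ∈ ℍ with the same sidelengths (d(w_k,w_{k+1}) = d(z_k,z_{k+1}) for all k) and F(w₁,…,wₙ) > F(z₁,…,zₙ). In particular, a maximal n-gon has pairwise distinct vertices. -/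
open Real Finset

noncomputable section

/-- Points of `ℝ³`. -/
abbrev V3 : Type := Fin 3 → ℝ

/-- The pseudo-Euclidean scalar product `⟨x,y⟩ = x₀y₀ − x₁y₁ − x₂y₂`. -/
def pscal (x y : V3) : ℝ := x 0 * y 0 - x 1 * y 1 - x 2 * y 2

/-- The hyperboloid model `ℍ` of the hyperbolic plane. -/
def Hyp : Set V3 := {x | pscal x x = 1 ∧ 0 < x 0}

/-- Inverse hyperbolic cosine. -/
def arcoshR (x : ℝ) : ℝ := Real.log (x + Real.sqrt (x ^ 2 - 1))

/-- Hyperbolic distance `d(a,b) = arcosh ⟨a,b⟩`. -/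
def dH (a b : V3) : ℝ := arcoshR (pscal a b)

/-- Determinant of the 3×3 matrix with columns `a`, `b`, `c`. -/
def det3 (a b c : V3) : ℝ :=
  a 0 * (b 1 * c 2 - b 2 * c 1) - b 0 * (a 1 * c 2 - a 2 * c 1) + c 0 * (a 1 * b 2 - a 2 * b 1)

/-- `S_ab = sinh(d(a,b)/2)`. -/
def SS (a b : V3) : ℝ := Real.sinh (dH a b / 2)

/-- Signed area of the triangle `a b c`. -/
def triArea (a b c : V3) : ℝ :=
  2 * Real.arctan (det3 a b c / (pscal a b + pscal b c + pscal c a + 1))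

/-- Signed area of the `n`-gon with vertices `z 1, …, z n`. -/
def polyArea (n : ℕ) (z : ℕ → V3) : ℝ :=
  ∑ k ∈ Finset.Ico 2 n, triArea (z 1) (z k) (z (k + 1))

/-- Cyclic successor on `{1, …, n}`. -/
def nxt (n k : ℕ) : ℕ := k % n + 1

/-- Oriented convexity of the `n`-gon `z 1, …, z n`. -/
def OrientedConvex (n : ℕ) (z : ℕ → V3) : Prop :=
  ∀ k ∈ Finset.Icc 1 n, ∀ j ∈ Finset.Icc 1 n,
    j ≠ k → j ≠ nxt n k → 0 < det3 (z k) (z (nxt n k)) (z j)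

/-- A set of points lies in a common 2-dimensional linear subspace of `ℝ³`. -/
def Collin (s : Set V3) : Prop :=
  ∃ W : Submodule ℝ V3, Module.finrank ℝ W = 2 ∧ ∀ x ∈ s, x ∈ W

/-- A set of points lies in a common affine plane of `ℝ³` not containing the origin. -/
def Cocyc (s : Set V3) : Prop :=
  ∃ u : V3, ∃ p : ℝ, u ≠ 0 ∧ p ≠ 0 ∧ ∀ x ∈ s, pscal u x = p

/- ### Auxiliary material -/

def crossL (a b : V3) : V3 :=
  ![a 1 * b 2 - a 2 * b 1, a 0 * b 2 - a 2 * b 0, a 1 * b 0 - a 0 * b 1]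

lemma pscal_comm (a b : V3) : pscal a b = pscal b a := by unfold pscal; ring

lemma key_ident {a b : V3} (ha : pscal a a = 1) (hb : pscal b b = 1) :
    (pscal a b - 1) * (a 0 * b 0 + a 1 * b 1 + a 2 * b 2 + 1)
      = (a 1 * b 2 - a 2 * b 1) ^ 2 + (a 1 - b 1) ^ 2 + (a 2 - b 2) ^ 2 := by
  simp only [pscal] at *
  linear_combination (((b 0)^2)) * ha + ((1 + (a 2)^2 + (a 1)^2)) * hb

lemma pos_aux {a b : V3} (ha : a ∈ Hyp) (hb : b ∈ Hyp) :
    0 < a 0 * b 0 + a 1 * b 1 + a 2 * b 2 + 1 := by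
  obtain ⟨ha1, ha2⟩ := ha
  obtain ⟨hb1, hb2⟩ := hb
  simp only [pscal] at ha1 hb1
  nlinarith [sq_nonneg (a 1 * b 2 - a 2 * b 1), mul_pos ha2 hb2,
    sq_nonneg (a 1 * b 1 + a 2 * b 2), sq_nonneg (a 0 * b 0 + a 1 * b 1 + a 2 * b 2)]

lemma pscal_ge_one {a b : V3} (ha : a ∈ Hyp) (hb : b ∈ Hyp) : 1 ≤ pscal a b := by
  have h := key_ident ha.1 hb.1
  have h2 := pos_aux ha hb
  nlinarith [sq_nonneg (a 1 * b 2 - a 2 * b 1), sq_nonneg (a 1 - b 1), sq_nonneg (a 2 - b 2)]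

lemma eq_of_pscal_eq_one {a b : V3} (ha : a ∈ Hyp) (hb : b ∈ Hyp)
    (h : pscal a b = 1) : a = b := by
  have hk := key_ident ha.1 hb.1
  rw [h] at hk
  have h1 : a 1 = b 1 := by nlinarith [sq_nonneg (a 1 * b 2 - a 2 * b 1), sq_nonneg (a 1 - b 1), sq_nonneg (a 2 - b 2)]
  have h2 : a 2 = b 2 := by nlinarith [sq_nonneg (a 1 * b 2 - a 2 * b 1), sq_nonneg (a 1 - b 1), sq_nonneg (a 2 - b 2)]
  have ha1 := ha.1; have hb1 := hb.1
  simp only [pscal] at ha1 hb1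
  have hsq : a 0 * a 0 = b 0 * b 0 := by rw [h1, h2] at ha1; linarith
  have h0 : a 0 = b 0 := by
    rcases mul_self_eq_mul_self_iff.mp hsq with h | h
    · exact h
    · exfalso; have := ha.2; have := hb.2; linarith
  funext i
  fin_cases i <;> assumption

lemma mem_hyp_of {x u : V3} (hx : pscal x x = 1) (hu : u ∈ Hyp) (hp : 0 < pscal x u) :
    x ∈ Hyp := by
  refine ⟨hx, ?_⟩
  rcases lt_trichotomy (x 0) 0 with h | h | h
  · exfalso
    have hy : (fun i => -x i : V3) ∈ Hyp := by
      constructor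
      · simp only [pscal] at hx ⊢; nlinarith
      · simp only; linarith
    have := pscal_ge_one hy hu
    simp only [pscal] at this hp
    nlinarith
  · exfalso
    simp only [pscal] at hx
    rw [h] at hx
    nlinarith [sq_nonneg (x 1), sq_nonneg (x 2)]
  · exact h

lemma one_lt_pscal_of_dH_pos {a b : V3} (ha : a ∈ Hyp) (hb : b ∈ Hyp)
    (h : 0 < dH a b) : 1 < pscal a b := by
  rcases lt_or_eq_of_le (pscal_ge_one ha hb) with h1 | h1
  · exact h1
  · exfalso
    have : dH a b = 0 := by
      unfold dH arcoshR
      rw [← h1]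
      norm_num
    linarith

lemma dH_congr {a b c d : V3} (h : pscal a b = pscal c d) : dH a b = dH c d := by
  unfold dH; rw [h]

lemma pscal_crossL (a b c : V3) : pscal (crossL a b) c = det3 a b c := by
  simp [pscal, det3, crossL]; ring

lemma lagrange (a b : V3) :
    pscal (crossL a b) (crossL a b) = pscal a a * pscal b b - pscal a b ^ 2 := by
  simp [pscal, crossL]; ring

lemma det3_swap23 (a b c : V3) : det3 a c b = -det3 a b c := by unfold det3; ring

lemma det3_cyc (a b c : V3) : det3 a b c = det3 b c a := by unfold det3; ring

lemma det3_aa (a b : V3) : det3 a b a = 0 := by unfold det3; ring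

lemma det3_bb (a b : V3) : det3 a b b = 0 := by unfold det3; ring

lemma det3_12 (a b : V3) : det3 a a b = 0 := by unfold det3; ring

/- ### Rotations about a point of the hyperboloid -/

def rotP (p : V3) (s c : ℝ) (x : V3) : V3 :=
  fun i => x i + s * crossL p x i + (1 - c) * crossL p (crossL p x) i

lemma rotP_fix (p : V3) (s c : ℝ) : rotP p s c p = p := by
  funext i
  fin_cases i <;> simp [rotP, crossL] <;> ring

lemma rotP_pscal (p : V3) {s c : ℝ} (hp : pscal p p = 1) (hsc : s ^ 2 + c ^ 2 = 1)
    (x y : V3) : pscal (rotP p s c x) (rotP p s c y) = pscal x y := by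
  have hp' : p 0 * p 0 - p 1 * p 1 - p 2 * p 2 = 1 := hp
  simp only [pscal, rotP, crossL, Matrix.cons_val_zero, Matrix.cons_val_one,
    Matrix.cons_val_two, Matrix.head_cons, Matrix.tail_cons]
  linear_combination (((x 2)*(y 2) + (-1)*(x 2)*(y 2)*(c)^2 + (-1)*(x 2)*(y 2)*(s)^2 + (x 1)*(y 1) + (-1)*(x 1)*(y 1)*(c)^2 + (-1)*(x 1)*(y 1)*(s)^2 + (p 2)^2*(x 1)*(y 1) + (-2)*(p 2)^2*(x 1)*(y 1)*(c) + (p 2)^2*(x 1)*(y 1)*(c)^2 + (-1)*(p 2)^2*(x 0)*(y 0) + 2*(p 2)^2*(x 0)*(y 0)*(c) + (-1)*(p 2)^2*(x 0)*(y 0)*(c)^2 + (-1)*(p 1)*(p 2)*(x 2)*(y 1) + 2*(p 1)*(p 2)*(x 2)*(y 1)*(c) + (-1)*(p 1)*(p 2)*(x 2)*(y 1)*(c)^2 + (-1)*(p 1)*(p 2)*(x 1)*(y 2) + 2*(p 1)*(p 2)*(x 1)*(y 2)*(c) + (-1)*(p 1)*(p 2)*(x 1)*(y 2)*(c)^2 +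 (p 1)^2*(x 2)*(y 2) + (-2)*(p 1)^2*(x 2)*(y 2)*(c) + (p 1)^2*(x 2)*(y 2)*(c)^2 + (-1)*(p 1)^2*(x 0)*(y 0) + 2*(p 1)^2*(x 0)*(y 0)*(c) + (-1)*(p 1)^2*(x 0)*(y 0)*(c)^2 + (p 0)*(p 2)*(x 2)*(y 0) + (-2)*(p 0)*(p 2)*(x 2)*(y 0)*(c) + (p 0)*(p 2)*(x 2)*(y 0)*(c)^2 + (p 0)*(p 2)*(x 0)*(y 2) + (-2)*(p 0)*(p 2)*(x 0)*(y 2)*(c) + (p 0)*(p 2)*(x 0)*(y 2)*(c)^2 + (p 0)*(p 1)*(x 1)*(y 0) + (-2)*(p 0)*(p 1)*(x 1)*(y 0)*(c) + (p 0)*(p 1)*(x 1)*(y 0)*(c)^2 + (p 0)*(p 1)*(x 0)*(y 1) + (-2)*(p 0)*(p 1)*(x 0)*(y 1)*(c) + (p 0)*(p 1)*(x 0)*(y 1)*(c)^2 + (-1)*(p 0)^2*(x 2)*(y 2) + 2*(p 0)^2*(x 2)*(y 2)*(c) + (-1)*(p 0)^2*(x 2)*(y 2)*(c)^2 + (-1)*(p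 0)^2*(x 1)*(y 1) + 2*(p 0)^2*(x 1)*(y 1)*(c) + (-1)*(p 0)^2*(x 1)*(y 1)*(c)^2)) * hp' + (((-1)*(x 2)*(y 2) + (-1)*(x 1)*(y 1) + (-1)*(p 2)^2*(x 2)*(y 2) + (-1)*(p 2)^2*(x 0)*(y 0) + (-1)*(p 1)*(p 2)*(x 2)*(y 1) + (-1)*(p 1)*(p 2)*(x 1)*(y 2) + (-1)*(p 1)^2*(x 1)*(y 1) + (-1)*(p 1)^2*(x 0)*(y 0) + (p 0)*(p 2)*(x 2)*(y 0) + (p 0)*(p 2)*(x 0)*(y 2) + (p 0)*(p 1)*(x 1)*(y 0) + (p 0)*(p 1)*(x 0)*(y 1))) * hsc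

lemma rotP_det3 (p : V3) {s c : ℝ} (hp : pscal p p = 1) (hsc : s ^ 2 + c ^ 2 = 1)
    (x y : V3) : det3 p (rotP p s c x) (rotP p s c y) = det3 p x y := by
  have hp' : p 0 * p 0 - p 1 * p 1 - p 2 * p 2 = 1 := hp
  simp only [pscal, det3, rotP, crossL, Matrix.cons_val_zero, Matrix.cons_val_one,
    Matrix.cons_val_two, Matrix.head_cons, Matrix.tail_cons]
  linear_combination (((p 2)*(x 1)*(y 0) + (-1)*(p 2)*(x 1)*(y 0)*(c)^2 + (-1)*(p 2)*(x 1)*(y 0)*(s)^2 + (-1)*(p 2)*(x 0)*(y 1) + (p 2)*(x 0)*(y 1)*(c)^2 + (p 2)*(x 0)*(y 1)*(s)^2 + (p 2)^3*(x 1)*(y 0) + (-2)*(p 2)^3*(x 1)*(y 0)*(c) + (p 2)^3*(x 1)*(y 0)*(c)^2 + (-1)*(p 2)^3*(x 0)*(y 1) + 2*(p 2)^3*(x 0)*(y 1)*(c) + (-1)*(p 2)^3*(x 0)*(y 1)*(c)^2 + (-1)*(p 1)*(x 2)*(y 0) + (p 1)*(x 2)*(y 0)*(c)^2 + (p 1)*(x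 2)*(y 0)*(s)^2 + (p 1)*(x 0)*(y 2) + (-1)*(p 1)*(x 0)*(y 2)*(c)^2 + (-1)*(p 1)*(x 0)*(y 2)*(s)^2 + (-1)*(p 1)*(p 2)^2*(x 2)*(y 0) + 2*(p 1)*(p 2)^2*(x 2)*(y 0)*(c) + (-1)*(p 1)*(p 2)^2*(x 2)*(y 0)*(c)^2 + (p 1)*(p 2)^2*(x 0)*(y 2) + (-2)*(p 1)*(p 2)^2*(x 0)*(y 2)*(c) + (p 1)*(p 2)^2*(x 0)*(y 2)*(c)^2 + (p 1)^2*(p 2)*(x 1)*(y 0) + (-2)*(p 1)^2*(p 2)*(x 1)*(y 0)*(c) + (p 1)^2*(p 2)*(x 1)*(y 0)*(c)^2 + (-1)*(p 1)^2*(p 2)*(x 0)*(y 1) + 2*(p 1)^2*(p 2)*(x 0)*(y 1)*(c) + (-1)*(p 1)^2*(p 2)*(x 0)*(y 1)*(c)^2 + (-1)*(p 1)^3*(x 2)*(y 0) + 2*(p 1)^3*(x 2)*(y 0)*(c) + (-1)*(p 1)^3*(x 2)*(y 0)*(c)^2 + (p 1)^3*(x 0)*(y 2) + (-2)*(p 1)^3*(x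 0)*(y 2)*(c) + (p 1)^3*(x 0)*(y 2)*(c)^2 + (p 0)*(x 2)*(y 1) + (-1)*(p 0)*(x 2)*(y 1)*(c)^2 + (-1)*(p 0)*(x 2)*(y 1)*(s)^2 + (-1)*(p 0)*(x 1)*(y 2) + (p 0)*(x 1)*(y 2)*(c)^2 + (p 0)*(x 1)*(y 2)*(s)^2 + (p 0)*(p 2)^2*(x 2)*(y 1) + (-2)*(p 0)*(p 2)^2*(x 2)*(y 1)*(c) + (p 0)*(p 2)^2*(x 2)*(y 1)*(c)^2 + (-1)*(p 0)*(p 2)^2*(x 1)*(y 2) + 2*(p 0)*(p 2)^2*(x 1)*(y 2)*(c) + (-1)*(p 0)*(p 2)^2*(x 1)*(y 2)*(c)^2 + (p 0)*(p 1)^2*(x 2)*(y 1) + (-2)*(p 0)*(p 1)^2*(x 2)*(y 1)*(c) + (p 0)*(p 1)^2*(x 2)*(y 1)*(c)^2 + (-1)*(p 0)*(p 1)^2*(x 1)*(y 2) + 2*(p 0)*(p 1)^2*(x 1)*(y 2)*(c) + (-1)*(p 0)*(p 1)^2*(x 1)*(y 2)*(c)^2 + (-1)*(p 0)^2*(p 2)*(x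 1)*(y 0) + 2*(p 0)^2*(p 2)*(x 1)*(y 0)*(c) + (-1)*(p 0)^2*(p 2)*(x 1)*(y 0)*(c)^2 + (p 0)^2*(p 2)*(x 0)*(y 1) + (-2)*(p 0)^2*(p 2)*(x 0)*(y 1)*(c) + (p 0)^2*(p 2)*(x 0)*(y 1)*(c)^2 + (p 0)^2*(p 1)*(x 2)*(y 0) + (-2)*(p 0)^2*(p 1)*(x 2)*(y 0)*(c) + (p 0)^2*(p 1)*(x 2)*(y 0)*(c)^2 + (-1)*(p 0)^2*(p 1)*(x 0)*(y 2) + 2*(p 0)^2*(p 1)*(x 0)*(y 2)*(c) + (-1)*(p 0)^2*(p 1)*(x 0)*(y 2)*(c)^2 + (-1)*(p 0)^3*(x 2)*(y 1) + 2*(p 0)^3*(x 2)*(y 1)*(c) + (-1)*(p 0)^3*(x 2)*(y 1)*(c)^2 + (p 0)^3*(x 1)*(y 2) + (-2)*(p 0)^3*(x 1)*(y 2)*(c) + (p 0)^3*(x 1)*(y 2)*(c)^2)) * hp' + (((-1)*(p 2)*(x 1)*(y 0) + (p 2)*(x 0)*(y 1) + (p 1)*(x 2)*(y 0) + (-1)*(p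 1)*(x 0)*(y 2) + (-1)*(p 0)*(x 2)*(y 1) + (p 0)*(x 1)*(y 2))) * hsc

lemma rotP_trip (p u v : V3) {s c : ℝ} (hp : pscal p p = 1) :
    det3 (rotP p s c u) p v
      = c * det3 u p v + s * det3 (crossL p u) p v := by
  have hp' : p 0 * p 0 - p 1 * p 1 - p 2 * p 2 = 1 := hp
  simp only [pscal, det3, rotP, crossL, Matrix.cons_val_zero, Matrix.cons_val_one,
    Matrix.cons_val_two, Matrix.head_cons, Matrix.tail_cons] at hp' ⊢
  linear_combination (((-1)*(p 2)*(u 1)*(v 0) + (p 2)*(u 1)*(v 0)*(c) + (p 2)*(u 0)*(v 1) + (-1)*(p 2)*(u 0)*(v 1)*(c) + (p 1)*(u 2)*(v 0) + (-1)*(p 1)*(u 2)*(v 0)*(c) + (-1)*(p 1)*(u 0)*(v 2) + (p 1)*(u 0)*(v 2)*(c) + (-1)*(p 0)*(u 2)*(v 1) + (p 0)*(u 2)*(v 1)*(c) + (p 0)*(u 1)*(v 2) + (-1)*(p 0)*(u 1)*(v 2)*(c))) * hp'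

lemma parseval (p u v : V3) (hp : pscal p p = 1) (hu : pscal u u = 1)
    (hv : pscal v v = 1) :
    det3 u p v ^ 2 + det3 (crossL p u) p v ^ 2
      = (pscal p u ^ 2 - 1) * (pscal p v ^ 2 - 1) := by
  have hp' : p 0 * p 0 - p 1 * p 1 - p 2 * p 2 = 1 := hp
  have hu' : u 0 * u 0 - u 1 * u 1 - u 2 * u 2 = 1 := hu
  have hv' : v 0 * v 0 - v 1 * v 1 - v 2 * v 2 = 1 := hv
  simp only [pscal, det3, crossL, Matrix.cons_val_zero, Matrix.cons_val_one,
    Matrix.cons_val_two, Matrix.head_cons, Matrix.tail_cons]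
  linear_combination (((v 0)^2 + (u 2)^2*(v 2)^2 + (u 2)^2*(v 1)^2 + (u 1)^2*(v 2)^2 + (u 1)^2*(v 1)^2 + (u 0)^2 + (-1)*(u 0)^2*(v 0)^2 + (p 2)^2*(u 2)^2*(v 2)^2 + (-1)*(p 2)^2*(u 1)^2*(v 1)^2 + 2*(p 2)^2*(u 0)*(u 1)*(v 0)*(v 1) + (-1)*(p 2)^2*(u 0)^2*(v 0)^2 + 2*(p 1)*(p 2)*(u 2)^2*(v 1)*(v 2) + 2*(p 1)*(p 2)*(u 1)*(u 2)*(v 2)^2 + 2*(p 1)*(p 2)*(u 1)*(u 2)*(v 1)^2 + 2*(p 1)*(p 2)*(u 1)^2*(v 1)*(v 2) + (-2)*(p 1)*(p 2)*(u 0)*(u 2)*(v 0)*(v 1) + (-2)*(p 1)*(p 2)*(u 0)*(u 1)*(v 0)*(v 2) + (-1)*(p 1)^2*(u 2)^2*(v 2)^2 + (p 1)^2*(u 1)^2*(v 1)^2 + 2*(p 1)^2*(u 0)*(u 2)*(v 0)*(v 2) + (-1)*(p 1)^2*(u 0)^2*(v 0)^2 + (-2)*(p 0)*(p 2)*(u 2)^2*(v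 0)*(v 2) + (-2)*(p 0)*(p 2)*(u 1)*(u 2)*(v 0)*(v 1) + (-2)*(p 0)*(p 2)*(u 0)*(u 2)*(v 2)^2 + 2*(p 0)*(p 2)*(u 0)*(u 2)*(v 0)^2 + (-2)*(p 0)*(p 2)*(u 0)*(u 1)*(v 1)*(v 2) + 2*(p 0)*(p 2)*(u 0)^2*(v 0)*(v 2) + (-2)*(p 0)*(p 1)*(u 1)*(u 2)*(v 0)*(v 2) + (-2)*(p 0)*(p 1)*(u 1)^2*(v 0)*(v 1) + (-2)*(p 0)*(p 1)*(u 0)*(u 2)*(v 1)*(v 2) + (-2)*(p 0)*(p 1)*(u 0)*(u 1)*(v 1)^2 + 2*(p 0)*(p 1)*(u 0)*(u 1)*(v 0)^2 + 2*(p 0)*(p 1)*(u 0)^2*(v 0)*(v 1) + (p 0)^2*(u 2)^2*(v 2)^2 + 2*(p 0)^2*(u 1)*(u 2)*(v 1)*(v 2) + (p 0)^2*(u 1)^2*(v 1)^2 + (-1)*(p 0)^2*(u 0)^2*(v 0)^2)) * hp' + ((1 + (-1)*(v 0)^2 + (p 2)^2 + (p 2)^2*(v 1)^2 + (-2)*(p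 2)^2*(v 0)^2 + (-2)*(p 1)*(p 2)*(v 1)*(v 2) + (p 1)^2 + (p 1)^2*(v 2)^2 + (-2)*(p 1)^2*(v 0)^2 + 2*(p 0)*(p 2)*(v 0)*(v 2) + 2*(p 0)*(p 1)*(v 0)*(v 1))) * hu' + (((-1)*(u 2)^2 + (-1)*(u 1)^2 + (-1)*(p 2)^2 + (-2)*(p 2)^2*(u 2)^2 + (-1)*(p 2)^2*(u 1)^2 + (-2)*(p 1)*(p 2)*(u 1)*(u 2) + (-1)*(p 1)^2 + (-1)*(p 1)^2*(u 2)^2 + (-2)*(p 1)^2*(u 1)^2 + 2*(p 0)*(p 2)*(u 0)*(u 2) + 2*(p 0)*(p 1)*(u 0)*(u 1))) * hv'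

/- ### The cocycle identity for signed triangle areas -/

lemma qpos {a b c : V3} (ha : a ∈ Hyp) (hb : b ∈ Hyp) (hc : c ∈ Hyp) :
    0 < pscal a b + pscal b c + pscal c a + 1 := by
  have h1 := pscal_ge_one ha hb
  have h2 := pscal_ge_one hb hc
  have h3 := pscal_ge_one hc ha
  linarith

lemma arg_aux {Q D : ℝ} (hQ : 0 < Q) :
    Complex.arg ((Q : ℂ) + (D : ℂ) * Complex.I) = Real.arctan (D / Q)
    ∧ ((Q : ℂ) + (D : ℂ) * Complex.I) ≠ 0
    ∧ |Complex.arg ((Q : ℂ) + (D : ℂ) * Complex.I)| < π / 2 := by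
  set z : ℂ := (Q : ℂ) + (D : ℂ) * Complex.I with hz
  have hre : z.re = Q := by simp [hz]
  have him : z.im = D := by simp [hz]
  have hz0 : z ≠ 0 := by
    intro h
    rw [h] at hre
    simp at hre
    linarith
  have habs : |Complex.arg z| < π / 2 :=
    Complex.abs_arg_lt_pi_div_two_iff.mpr (Or.inl (by rw [hre]; exact hQ))
  have habs' := abs_lt.mp habs
  have htan : Real.tan (Complex.arg z) = D / Q := by
    rw [Complex.tan_arg, hre, him]
  refine ⟨?_, hz0, habs⟩
  rw [← htan, Real.arctan_tan habs'.1 habs'.2]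

set_option maxHeartbeats 2000000 in
lemma cocycle {a b c d : V3} (ha : a ∈ Hyp) (hb : b ∈ Hyp) (hc : c ∈ Hyp)
    (hd : d ∈ Hyp) :
    triArea a b c + triArea a c d = triArea a b d + triArea b c d := by
  have hQ1 := qpos ha hb hc
  have hQ2 := qpos ha hc hd
  have hQ3 := qpos ha hb hd
  have hQ4 := qpos hb hc hd
  obtain ⟨hA1, hz1, hb1⟩ := arg_aux (D := det3 a b c) hQ1
  obtain ⟨hA2, hz2, hb2⟩ := arg_aux (D := det3 a c d) hQ2
  obtain ⟨hA3, hz3, hb3⟩ := arg_aux (D := det3 a b d) hQ3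
  obtain ⟨hA4, hz4, hb4⟩ := arg_aux (D := det3 b c d) hQ4
  set z1 : ℂ := ((pscal a b + pscal b c + pscal c a + 1 : ℝ) : ℂ) + (det3 a b c : ℂ) * Complex.I with hzd1
  set z2 : ℂ := ((pscal a c + pscal c d + pscal d a + 1 : ℝ) : ℂ) + (det3 a c d : ℂ) * Complex.I with hzd2
  set z3 : ℂ := ((pscal a b + pscal b d + pscal d a + 1 : ℝ) : ℂ) + (det3 a b d : ℂ) * Complex.I with hzd3
  set z4 : ℂ := ((pscal b c + pscal c d + pscal d b + 1 : ℝ) : ℂ) + (det3 b c d : ℂ) * Complex.I with hzd4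
  have hf : (0 : ℝ) < 1 + pscal b d := by have := pscal_ge_one hb hd; linarith
  have hg : (0 : ℝ) < 1 + pscal a c := by have := pscal_ge_one ha hc; linarith
  have ha' : a 0 * a 0 - a 1 * a 1 - a 2 * a 2 = 1 := ha.1
  have hb' : b 0 * b 0 - b 1 * b 1 - b 2 * b 2 = 1 := hb.1
  have hc' : c 0 * c 0 - c 1 * c 1 - c 2 * c 2 = 1 := hc.1
  have hd' : d 0 * d 0 - d 1 * d 1 - d 2 * d 2 = 1 := hd.1
  have hre : (1 + pscal b d) * ((pscal a b + pscal b c + pscal c a + 1) * (pscal a c + pscal c d + pscal d a + 1) - det3 a b c * det3 a c d)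
      = (1 + pscal a c) * ((pscal a b + pscal b d + pscal d a + 1) * (pscal b c + pscal c d + pscal d b + 1) - det3 a b d * det3 b c d) := by
    simp only [pscal, det3]
    linear_combination (((c 0)*(c 2)*(d 0)*(d 2) + (c 0)*(c 1)*(d 0)*(d 1) + (c 0)^2 + (-1)*(c 0)^2*(d 0)^2 + (-1)*(b 2)*(c 1)*(c 2)*(d 1) + (b 2)*(c 1)^2*(d 2) + (b 2)*(c 0)*(c 2)*(d 0) + (-1)*(b 2)*(c 0)^2*(d 2) + (b 2)^2*(c 1)*(c 2)*(d 1)*(d 2) + (-1)*(b 2)^2*(c 1)^2*(d 2)^2 + (b 2)^2*(c 0)*(c 1)*(d 0)*(d 1) + (-1)*(b 2)^2*(c 0)^2*(d 1)^2 + (b 1)*(c 2)^2*(d 1) + (-1)*(b 1)*(c 1)*(c 2)*(d 2) + (b 1)*(c 0)*(c 1)*(d 0) + (-1)*(b 1)*(c 0)^2*(d 1) + (-1)*(b 1)*(b 2)*(c 2)^2*(d 1)*(d 2) + (b 1)*(b 2)*(c 1)*(c 2)*(d 2)^2 + (b 1)*(b 2)*(c 1)*(c 2)*(d 1)^2 +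 (-1)*(b 1)*(b 2)*(c 1)^2*(d 1)*(d 2) + (-1)*(b 1)*(b 2)*(c 0)*(c 2)*(d 0)*(d 1) + (-1)*(b 1)*(b 2)*(c 0)*(c 1)*(d 0)*(d 2) + 2*(b 1)*(b 2)*(c 0)^2*(d 1)*(d 2) + (-1)*(b 1)^2*(c 2)^2*(d 1)^2 + (b 1)^2*(c 1)*(c 2)*(d 1)*(d 2) + (b 1)^2*(c 0)*(c 2)*(d 0)*(d 2) + (-1)*(b 1)^2*(c 0)^2*(d 2)^2 + (b 0)*(d 0) + (b 0)*(c 0)*(c 2)*(d 2) + (b 0)*(c 0)*(c 1)*(d 1) + (-1)*(b 0)*(c 0)^2*(d 0) + (-1)*(b 0)*(b 2)*(d 0)*(d 2) + (-1)*(b 0)*(b 2)*(c 1)*(c 2)*(d 0)*(d 1) + (b 0)*(b 2)*(c 1)^2*(d 0)*(d 2) + (b 0)*(b 2)*(c 0)*(c 2) + (b 0)*(b 2)*(c 0)*(c 2)*(d 1)^2 + (-1)*(b 0)*(b 2)*(c 0)*(c 1)*(d 1)*(d 2) + (-1)*(b 0)*(b 1)*(d 0)*(d 1) + (b 0)*(b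 1)*(c 2)^2*(d 0)*(d 1) + (-1)*(b 0)*(b 1)*(c 1)*(c 2)*(d 0)*(d 2) + (-1)*(b 0)*(b 1)*(c 0)*(c 2)*(d 1)*(d 2) + (b 0)*(b 1)*(c 0)*(c 1) + (b 0)*(b 1)*(c 0)*(c 1)*(d 2)^2 + (b 0)^2*(d 0)^2 + (-1)*(b 0)^2*(c 0)^2)) * ha' + (((-1)*(c 0)*(c 2)*(d 0)*(d 2) + (-1)*(c 0)*(c 1)*(d 0)*(d 1) + (-1)*(c 0)^2 + (c 0)^2*(d 0)^2 + (-1)*(a 2)*(c 2)*(d 1)^2 + (a 2)*(c 2)*(d 0)^2 + (a 2)*(c 1)*(d 1)*(d 2) + (-1)*(a 2)*(c 0)*(d 0)*(d 2) + (a 2)^2*(d 0)^2 + (a 2)^2*(c 2)^2*(d 1)^2 + (-1)*(a 2)^2*(c 1)*(c 2)*(d 1)*(d 2) + (a 2)^2*(c 1)^2*(d 0)^2 + (-1)*(a 2)^2*(c 0)*(c 1)*(d 0)*(d 1) + (-1)*(a 2)^2*(c 0)^2 + (a 1)*(c 2)*(d 1)*(d 2) + (-1)*(a 1)*(c 1)*(d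 2)^2 + (a 1)*(c 1)*(d 0)^2 + (-1)*(a 1)*(c 0)*(d 0)*(d 1) + (-1)*(a 1)*(a 2)*(c 2)^2*(d 1)*(d 2) + (a 1)*(a 2)*(c 1)*(c 2)*(d 2)^2 + (a 1)*(a 2)*(c 1)*(c 2)*(d 1)^2 + (-2)*(a 1)*(a 2)*(c 1)*(c 2)*(d 0)^2 + (-1)*(a 1)*(a 2)*(c 1)^2*(d 1)*(d 2) + (a 1)*(a 2)*(c 0)*(c 2)*(d 0)*(d 1) + (a 1)*(a 2)*(c 0)*(c 1)*(d 0)*(d 2) + (a 1)^2*(d 0)^2 + (a 1)^2*(c 2)^2*(d 0)^2 + (-1)*(a 1)^2*(c 1)*(c 2)*(d 1)*(d 2) + (a 1)^2*(c 1)^2*(d 2)^2 + (-1)*(a 1)^2*(c 0)*(c 2)*(d 0)*(d 2) + (-1)*(a 1)^2*(c 0)^2 + (-1)*(a 0)*(c 2)*(d 0)*(d 2) + (-1)*(a 0)*(c 1)*(d 0)*(d 1) + (-1)*(a 0)*(c 0) + (a 0)*(c 0)*(d 0)^2 + (-1)*(a 0)*(a 2)*(d 0)*(d 2) + (a 0)*(a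 2)*(c 1)*(c 2)*(d 0)*(d 1) + (-1)*(a 0)*(a 2)*(c 1)^2*(d 0)*(d 2) + (a 0)*(a 2)*(c 0)*(c 2) + (-1)*(a 0)*(a 2)*(c 0)*(c 2)*(d 1)^2 + (a 0)*(a 2)*(c 0)*(c 1)*(d 1)*(d 2) + (-1)*(a 0)*(a 1)*(d 0)*(d 1) + (-1)*(a 0)*(a 1)*(c 2)^2*(d 0)*(d 1) + (a 0)*(a 1)*(c 1)*(c 2)*(d 0)*(d 2) + (a 0)*(a 1)*(c 0)*(c 2)*(d 1)*(d 2) + (a 0)*(a 1)*(c 0)*(c 1) + (-1)*(a 0)*(a 1)*(c 0)*(c 1)*(d 2)^2)) * hb' + (((-1)*(b 2)*(d 2) + (-1)*(b 2)^2 + (-1)*(b 2)^2*(d 1)^2 + (b 2)^2*(d 0)^2 + (-1)*(b 1)*(d 1) + 2*(b 1)*(b 2)*(d 1)*(d 2) + (-1)*(b 1)^2 + (-1)*(b 1)^2*(d 2)^2 + (b 1)^2*(d 0)^2 + (-1)*(b 0)*(b 2)*(d 0)*(d 2) + (-1)*(b 0)*(b 1)*(d 0)*(d 1) + (-1)*(a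 2)^2*(d 0)^2 + (-1)*(a 2)^2*(b 2)*(d 2) + (-1)*(a 2)^2*(b 2)^2 + (-1)*(a 2)^2*(b 2)^2*(d 1)^2 + (a 2)^2*(b 1)*(b 2)*(d 1)*(d 2) + (-1)*(a 2)^2*(b 1)^2 + (-1)*(a 2)^2*(b 1)^2*(d 2)^2 + (-1)*(a 2)^2*(b 1)^2*(d 1)^2 + (-1)*(a 2)^2*(b 0)*(d 0) + (a 2)^2*(b 0)*(b 1)*(d 0)*(d 1) + (-1)*(a 1)*(a 2)*(b 2)*(d 1) + (a 1)*(a 2)*(b 2)^2*(d 1)*(d 2) + (-1)*(a 1)*(a 2)*(b 1)*(d 2) + (a 1)*(a 2)*(b 1)*(b 2)*(d 2)^2 + (a 1)*(a 2)*(b 1)*(b 2)*(d 1)^2 + (a 1)*(a 2)*(b 1)^2*(d 1)*(d 2) + (-1)*(a 1)*(a 2)*(b 0)*(b 2)*(d 0)*(d 1) + (-1)*(a 1)*(a 2)*(b 0)*(b 1)*(d 0)*(d 2) + (-1)*(a 1)^2*(d 0)^2 + (-1)*(a 1)^2*(b 2)^2 + (-1)*(a 1)^2*(b 2)^2*(d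 2)^2 + (-1)*(a 1)^2*(b 2)^2*(d 1)^2 + (-1)*(a 1)^2*(b 1)*(d 1) + (a 1)^2*(b 1)*(b 2)*(d 1)*(d 2) + (-1)*(a 1)^2*(b 1)^2 + (-1)*(a 1)^2*(b 1)^2*(d 2)^2 + (-1)*(a 1)^2*(b 0)*(d 0) + (a 1)^2*(b 0)*(b 2)*(d 0)*(d 2) + (a 0)*(a 2)*(d 0)*(d 2) + (a 0)*(a 2)*(b 2)*(d 0) + (-1)*(a 0)*(a 2)*(b 1)*(b 2)*(d 0)*(d 1) + (a 0)*(a 2)*(b 1)^2*(d 0)*(d 2) + (a 0)*(a 2)*(b 0)*(d 2) + (a 0)*(a 2)*(b 0)*(b 2) + (a 0)*(a 2)*(b 0)*(b 2)*(d 1)^2 + (-1)*(a 0)*(a 2)*(b 0)*(b 1)*(d 1)*(d 2) + (a 0)*(a 1)*(d 0)*(d 1) + (a 0)*(a 1)*(b 2)^2*(d 0)*(d 1) + (a 0)*(a 1)*(b 1)*(d 0) + (-1)*(a 0)*(a 1)*(b 1)*(b 2)*(d 0)*(d 2) + (a 0)*(a 1)*(b 0)*(d 1) + (-1)*(a 0)*(a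 1)*(b 0)*(b 2)*(d 1)*(d 2) + (a 0)*(a 1)*(b 0)*(b 1) + (a 0)*(a 1)*(b 0)*(b 1)*(d 2)^2)) * hc' + (((b 2)^2 + (b 2)^2*(c 2)^2 + (b 2)^2*(c 1)^2 + (b 1)^2 + (b 1)^2*(c 2)^2 + (b 1)^2*(c 1)^2 + (-1)*(b 0)*(b 2)*(c 0)*(c 2) + (-1)*(b 0)*(b 1)*(c 0)*(c 1) + (a 2)*(c 2) + (a 2)*(b 2)^2*(c 2) + (a 2)*(b 1)*(b 2)*(c 1) + (-1)*(a 2)*(b 0)*(b 2)*(c 0) + (-1)*(a 2)^2*(c 2)^2 + (a 2)^2*(b 2)^2 + (a 2)^2*(b 2)^2*(c 1)^2 + (-1)*(a 2)^2*(b 1)*(b 2)*(c 1)*(c 2) + (a 2)^2*(b 1)^2 + (a 2)^2*(b 1)^2*(c 2)^2 + (a 2)^2*(b 1)^2*(c 1)^2 + (-1)*(a 2)^2*(b 0)*(b 1)*(c 0)*(c 1) + (a 1)*(c 1) + (a 1)*(b 1)*(b 2)*(c 2) + (a 1)*(b 1)^2*(c 1) + (-1)*(a 1)*(b 0)*(b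 1)*(c 0) + (-2)*(a 1)*(a 2)*(c 1)*(c 2) + (-1)*(a 1)*(a 2)*(b 2)^2*(c 1)*(c 2) + (-1)*(a 1)*(a 2)*(b 1)*(b 2)*(c 2)^2 + (-1)*(a 1)*(a 2)*(b 1)*(b 2)*(c 1)^2 + (-1)*(a 1)*(a 2)*(b 1)^2*(c 1)*(c 2) + (a 1)*(a 2)*(b 0)*(b 2)*(c 0)*(c 1) + (a 1)*(a 2)*(b 0)*(b 1)*(c 0)*(c 2) + (-1)*(a 1)^2*(c 1)^2 + (a 1)^2*(b 2)^2 + (a 1)^2*(b 2)^2*(c 2)^2 + (a 1)^2*(b 2)^2*(c 1)^2 + (-1)*(a 1)^2*(b 1)*(b 2)*(c 1)*(c 2) + (a 1)^2*(b 1)^2 + (a 1)^2*(b 1)^2*(c 2)^2 + (-1)*(a 1)^2*(b 0)*(b 2)*(c 0)*(c 2) + (a 0)*(b 2)^2*(c 0) + (a 0)*(b 1)^2*(c 0) + (-1)*(a 0)*(b 0)*(b 2)*(c 2) + (-1)*(a 0)*(b 0)*(b 1)*(c 1) + (a 0)*(a 2)*(c 0)*(c 2) + (a 0)*(a 2)*(b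 1)*(b 2)*(c 0)*(c 1) + (-1)*(a 0)*(a 2)*(b 1)^2*(c 0)*(c 2) + (-1)*(a 0)*(a 2)*(b 0)*(b 2) + (-1)*(a 0)*(a 2)*(b 0)*(b 2)*(c 1)^2 + (a 0)*(a 2)*(b 0)*(b 1)*(c 1)*(c 2) + (a 0)*(a 1)*(c 0)*(c 1) + (-1)*(a 0)*(a 1)*(b 2)^2*(c 0)*(c 1) + (a 0)*(a 1)*(b 1)*(b 2)*(c 0)*(c 2) + (a 0)*(a 1)*(b 0)*(b 2)*(c 1)*(c 2) + (-1)*(a 0)*(a 1)*(b 0)*(b 1) + (-1)*(a 0)*(a 1)*(b 0)*(b 1)*(c 2)^2)) * hd'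
  have him : (1 + pscal b d) * ((pscal a b + pscal b c + pscal c a + 1) * det3 a c d + det3 a b c * (pscal a c + pscal c d + pscal d a + 1))
      = (1 + pscal a c) * ((pscal a b + pscal b d + pscal d a + 1) * det3 b c d + det3 a b d * (pscal b c + pscal c d + pscal d b + 1)) := by
    simp only [pscal, det3]
    linear_combination (((-1)*(c 0)*(c 2)*(d 1) + (c 0)*(c 1)*(d 2) + (-1)*(b 2)*(c 1)*(d 0) + (b 2)*(c 0)*(d 1) + (-1)*(b 2)*(c 0)*(c 1) + (-1)*(b 2)*(c 0)*(c 1)*(d 2)^2 + (-1)*(b 2)*(c 0)*(c 1)*(d 1)^2 + (b 2)*(c 0)*(c 1)*(d 0)^2 + (b 2)^2*(c 1)*(d 0)*(d 2) + (-1)*(b 2)^2*(c 0)*(d 1)*(d 2) + (-1)*(b 2)^2*(c 0)*(c 2)*(d 1) + (b 2)^2*(c 0)*(c 1)*(d 2) + (b 1)*(c 2)*(d 0) + (-1)*(b 1)*(c 0)*(d 2) + (b 1)*(c 0)*(c 2) + (b 1)*(c 0)*(c 2)*(d 2)^2 + (b 1)*(c 0)*(c 2)*(d 1)^2 + (-1)*(b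 1)*(c 0)*(c 2)*(d 0)^2 + (-1)*(b 1)*(b 2)*(c 2)*(d 0)*(d 2) + (b 1)*(b 2)*(c 1)*(d 0)*(d 1) + (b 1)*(b 2)*(c 0)*(d 2)^2 + (-1)*(b 1)*(b 2)*(c 0)*(d 1)^2 + (-1)*(b 1)^2*(c 2)*(d 0)*(d 1) + (b 1)^2*(c 0)*(d 1)*(d 2) + (-1)*(b 1)^2*(c 0)*(c 2)*(d 1) + (b 1)^2*(c 0)*(c 1)*(d 2) + (-1)*(b 0)*(c 2)*(d 1) + (b 0)*(c 1)*(d 2) + (b 0)*(b 2)*(c 2)*(d 1)*(d 2) + (-1)*(b 0)*(b 2)*(c 1)*(d 2)^2 + (-1)*(b 0)*(b 2)*(c 1)*(d 0)^2 + (b 0)*(b 2)*(c 0)*(d 0)*(d 1) + (b 0)*(b 1)*(c 2)*(d 1)^2 + (b 0)*(b 1)*(c 2)*(d 0)^2 + (-1)*(b 0)*(b 1)*(c 1)*(d 1)*(d 2) + (-1)*(b 0)*(b 1)*(c 0)*(d 0)*(d 2) + (-1)*(b 0)^2*(c 2)*(d 0)*(d 1) + (b 0)^2*(c 1)*(d 0)*(d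 2) + (b 0)^2*(c 0)*(c 2)*(d 1) + (-1)*(b 0)^2*(c 0)*(c 1)*(d 2))) * ha' + (((c 0)*(c 2)*(d 1) + (-1)*(c 0)*(c 1)*(d 2) + (-1)*(a 2)*(d 0)*(d 1) + (-1)*(a 2)*(c 2)^2*(d 0)*(d 1) + (a 2)*(c 1)*(d 0) + (-1)*(a 2)*(c 1)^2*(d 0)*(d 1) + (-1)*(a 2)*(c 0)*(d 1) + (a 2)*(c 0)^2*(d 0)*(d 1) + (-1)*(a 2)^2*(c 1)*(c 2)*(d 0) + 2*(a 2)^2*(c 0)*(c 2)*(d 1) + (-1)*(a 2)^2*(c 0)*(c 1)*(d 2) + (a 1)*(d 0)*(d 2) + (-1)*(a 1)*(c 2)*(d 0) + (a 1)*(c 2)^2*(d 0)*(d 2) + (a 1)*(c 1)^2*(d 0)*(d 2) + (a 1)*(c 0)*(d 2) + (-1)*(a 1)*(c 0)^2*(d 0)*(d 2) + (a 1)*(a 2)*(c 2)^2*(d 0) + (-1)*(a 1)*(a 2)*(c 1)^2*(d 0) + (-1)*(a 1)*(a 2)*(c 0)*(c 2)*(d 2) + (a 1)*(a 2)*(c 0)*(c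 1)*(d 1) + (a 1)^2*(c 1)*(c 2)*(d 0) + (a 1)^2*(c 0)*(c 2)*(d 1) + (-2)*(a 1)^2*(c 0)*(c 1)*(d 2) + (a 0)*(c 2)*(d 1) + (-1)*(a 0)*(c 1)*(d 2) + (-1)*(a 0)*(a 2)*(c 2)^2*(d 1) + (a 0)*(a 2)*(c 1)*(c 2)*(d 2) + (a 0)*(a 2)*(c 0)*(c 1)*(d 0) + (-1)*(a 0)*(a 2)*(c 0)^2*(d 1) + (-1)*(a 0)*(a 1)*(c 1)*(c 2)*(d 1) + (a 0)*(a 1)*(c 1)^2*(d 2) + (-1)*(a 0)*(a 1)*(c 0)*(c 2)*(d 0) + (a 0)*(a 1)*(c 0)^2*(d 2))) * hb' + (((a 2)*(d 0)*(d 1) + (a 2)*(b 2)^2*(d 0)*(d 1) + (-1)*(a 2)*(b 1)*(d 0) + (a 2)*(b 1)*(b 2)*(d 0)*(d 2) + 2*(a 2)*(b 1)^2*(d 0)*(d 1) + (a 2)*(b 0)*(d 1) + (-1)*(a 2)*(b 0)*(b 2)*(d 1)*(d 2) + (-1)*(a 2)*(b 0)*(b 1)*(d 1)^2 + (-1)*(a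 2)*(b 0)*(b 1)*(d 0)^2 + (-1)*(a 1)*(d 0)*(d 2) + (a 1)*(b 2)*(d 0) + (-2)*(a 1)*(b 2)^2*(d 0)*(d 2) + (-1)*(a 1)*(b 1)*(b 2)*(d 0)*(d 1) + (-1)*(a 1)*(b 1)^2*(d 0)*(d 2) + (-1)*(a 1)*(b 0)*(d 2) + (a 1)*(b 0)*(b 2)*(d 2)^2 + (a 1)*(b 0)*(b 2)*(d 0)^2 + (a 1)*(b 0)*(b 1)*(d 1)*(d 2) + (-1)*(a 0)*(b 2)*(d 1) + (a 0)*(b 2)^2*(d 1)*(d 2) + (a 0)*(b 1)*(d 2) + (-1)*(a 0)*(b 1)*(b 2)*(d 2)^2 + (a 0)*(b 1)*(b 2)*(d 1)^2 + (-1)*(a 0)*(b 1)^2*(d 1)*(d 2) + (-1)*(a 0)*(b 0)*(b 2)*(d 0)*(d 1) + (a 0)*(b 0)*(b 1)*(d 0)*(d 2) + (-1)*(a 0)*(a 2)*(b 1) + (-1)*(a 0)*(a 2)*(b 1)*(d 2)^2 + (-1)*(a 0)*(a 2)*(b 1)*(d 1)^2 + (a 0)*(a 2)*(b 1)*(d 0)^2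 + (a 0)*(a 1)*(b 2) + (a 0)*(a 1)*(b 2)*(d 2)^2 + (a 0)*(a 1)*(b 2)*(d 1)^2 + (-1)*(a 0)*(a 1)*(b 2)*(d 0)^2)) * hc' + (((b 2)*(c 0)*(c 1) + (-1)*(b 1)*(c 0)*(c 2) + (a 2)*(b 1)*(c 0) + (-1)*(a 2)*(b 0)*(c 1) + (a 2)^2*(b 2)*(c 0)*(c 1) + (-2)*(a 2)^2*(b 1)*(c 0)*(c 2) + (a 2)^2*(b 0)*(c 1)*(c 2) + (-1)*(a 1)*(b 2)*(c 0) + (a 1)*(b 0)*(c 2) + (a 1)*(a 2)*(b 2)*(c 0)*(c 2) + (-1)*(a 1)*(a 2)*(b 1)*(c 0)*(c 1) + (-1)*(a 1)*(a 2)*(b 0)*(c 2)^2 + (a 1)*(a 2)*(b 0)*(c 1)^2 + 2*(a 1)^2*(b 2)*(c 0)*(c 1) + (-1)*(a 1)^2*(b 1)*(c 0)*(c 2) + (-1)*(a 1)^2*(b 0)*(c 1)*(c 2) + (a 0)*(b 2)*(c 1) + (-1)*(a 0)*(b 1)*(c 2) + (-1)*(a 0)*(a 2)*(b 2)*(c 1)*(c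 2) + (a 0)*(a 2)*(b 1) + 2*(a 0)*(a 2)*(b 1)*(c 2)^2 + (a 0)*(a 2)*(b 1)*(c 1)^2 + (-1)*(a 0)*(a 2)*(b 0)*(c 0)*(c 1) + (-1)*(a 0)*(a 1)*(b 2) + (-1)*(a 0)*(a 1)*(b 2)*(c 2)^2 + (-2)*(a 0)*(a 1)*(b 2)*(c 1)^2 + (a 0)*(a 1)*(b 1)*(c 1)*(c 2) + (a 0)*(a 1)*(b 0)*(c 0)*(c 2))) * hd'
  have hkey : ((1 + pscal b d : ℝ) : ℂ) * (z1 * z2) = ((1 + pscal a c : ℝ) : ℂ) * (z3 * z4) := by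
    rw [Complex.ext_iff]
    constructor
    · simp only [hzd1, hzd2, hzd3, hzd4, Complex.add_re, Complex.add_im, Complex.mul_re,
        Complex.mul_im, Complex.ofReal_re, Complex.ofReal_im, Complex.I_re, Complex.I_im]
      linear_combination hre
    · simp only [hzd1, hzd2, hzd3, hzd4, Complex.add_re, Complex.add_im, Complex.mul_re,
        Complex.mul_im, Complex.ofReal_re, Complex.ofReal_im, Complex.I_re, Complex.I_im]
      linear_combination him
  have hang : ((Complex.arg z1 + Complex.arg z2 : ℝ) : Real.Angle)
      = ((Complex.arg z3 + Complex.arg z4 : ℝ) : Real.Angle) := by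
    rw [Real.Angle.coe_add, Real.Angle.coe_add, ← Complex.arg_mul_coe_angle hz1 hz2,
      ← Complex.arg_mul_coe_angle hz3 hz4]
    have e1 : Complex.arg (z1 * z2) = Complex.arg (((1 + pscal b d : ℝ) : ℂ) * (z1 * z2)) :=
      (Complex.arg_real_mul _ hf).symm
    have e2 : Complex.arg (z3 * z4) = Complex.arg (((1 + pscal a c : ℝ) : ℂ) * (z3 * z4)) :=
      (Complex.arg_real_mul _ hg).symm
    rw [e1, e2, hkey]
  obtain ⟨k, hk⟩ := Real.Angle.angle_eq_iff_two_pi_dvd_sub.mp hang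
  have hpi := Real.pi_pos
  have hk0 : k = 0 := by
    by_contra hk0
    have h1 : (1 : ℝ) ≤ |(k : ℝ)| := by
      have := Int.one_le_abs hk0
      calc (1 : ℝ) ≤ |k| := by exact_mod_cast this
        _ = |(k : ℝ)| := by rw [Int.cast_abs]
    have h2 : |Complex.arg z1 + Complex.arg z2 - (Complex.arg z3 + Complex.arg z4)| < 2 * π := by
      have b1 := abs_lt.mp hb1; have b2 := abs_lt.mp hb2
      have b3 := abs_lt.mp hb3; have b4 := abs_lt.mp hb4
      rw [abs_lt]; constructor <;> linarith [b1.1, b1.2, b2.1, b2.2, b3.1, b3.2, b4.1, b4.2]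
    rw [hk, abs_mul, abs_mul] at h2
    have : |(2 : ℝ)| = 2 := by norm_num
    rw [this, abs_of_pos hpi] at h2
    nlinarith
  rw [hk0] at hk
  simp only [Int.cast_zero, mul_zero] at hk
  have e1 : triArea a b c = 2 * Complex.arg z1 := by unfold triArea; rw [hA1]
  have e2 : triArea a c d = 2 * Complex.arg z2 := by unfold triArea; rw [hA2]
  have e3 : triArea a b d = 2 * Complex.arg z3 := by unfold triArea; rw [hA3]
  have e4 : triArea b c d = 2 * Complex.arg z4 := by unfold triArea; rw [hA4]
  rw [e1, e2, e3, e4]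
  linarith

/- ### Elementary facts about `triArea` -/

lemma triArea_cyc (a b c : V3) : triArea a b c = triArea b c a := by
  unfold triArea
  rw [det3_cyc]
  congr 2
  rw [pscal_comm c a]
  ring

lemma triArea_abb (a b : V3) : triArea a b b = 0 := by
  unfold triArea
  rw [det3_bb, zero_div, Real.arctan_zero, mul_zero]

lemma triArea_aab (a b : V3) : triArea a a b = 0 := by
  unfold triArea
  rw [det3_12, zero_div, Real.arctan_zero, mul_zero]

lemma triArea_flip2 {a b c b' : V3} (h1 : pscal a b' = pscal a b)
    (h2 : pscal b' c = pscal b c) (h3 : det3 a b' c = -det3 a b c) :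
    triArea a b' c = -triArea a b c := by
  unfold triArea
  rw [h1, h2, h3, neg_div, Real.arctan_neg]
  ring

lemma triArea_flip3 {a b c c' : V3} (h1 : pscal b c' = pscal b c)
    (h2 : pscal c' a = pscal c a) (h3 : det3 a b c' = -det3 a b c) :
    triArea a b c' = -triArea a b c := by
  unfold triArea
  rw [h1, h2, h3, neg_div, Real.arctan_neg]
  ring

lemma triArea_neg_of {a b c : V3} (ha : a ∈ Hyp) (hb : b ∈ Hyp) (hc : c ∈ Hyp)
    (h : det3 a b c < 0) : triArea a b c < 0 := by
  unfold triArea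
  have hQ := qpos ha hb hc
  have h1 : det3 a b c / (pscal a b + pscal b c + pscal c a + 1) < 0 :=
    div_neg_of_neg_of_pos h hQ
  have h2 := Real.arctan_strictMono h1
  rw [Real.arctan_zero] at h2
  linarith

/- ### Rotations preserve the hyperboloid, distances and areas -/

lemma rotP_mem {p x : V3} {s c : ℝ} (hp : p ∈ Hyp) (hsc : s ^ 2 + c ^ 2 = 1)
    (hx : x ∈ Hyp) : rotP p s c x ∈ Hyp := by
  have h1 : pscal (rotP p s c x) (rotP p s c x) = 1 := by
    rw [rotP_pscal p hp.1 hsc]; exact hx.1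
  have h2 : pscal (rotP p s c x) p = pscal x p := by
    have h := rotP_pscal p hp.1 hsc x p
    rwa [rotP_fix] at h
  refine mem_hyp_of h1 hp ?_
  rw [h2]
  linarith [pscal_ge_one hx hp]

lemma rotP_pscal_left {p x : V3} {s c : ℝ} (hp : pscal p p = 1)
    (hsc : s ^ 2 + c ^ 2 = 1) : pscal p (rotP p s c x) = pscal p x := by
  have h := rotP_pscal p hp hsc p x
  rwa [rotP_fix] at h

lemma rotP_pscal_right {p x : V3} {s c : ℝ} (hp : pscal p p = 1)
    (hsc : s ^ 2 + c ^ 2 = 1) : pscal (rotP p s c x) p = pscal x p := by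
  have h := rotP_pscal p hp hsc x p
  rwa [rotP_fix] at h

lemma triArea_rot {p x y : V3} {s c : ℝ} (hp : pscal p p = 1)
    (hsc : s ^ 2 + c ^ 2 = 1) :
    triArea p (rotP p s c x) (rotP p s c y) = triArea p x y := by
  unfold triArea
  rw [rotP_det3 p hp hsc, rotP_pscal_left hp hsc, rotP_pscal p hp hsc,
    rotP_pscal_right hp hsc]

/- ### Reflection of a single vertex across a chord -/

lemma flip_exists (a b r : V3) (ha : a ∈ Hyp) (hb : b ∈ Hyp) (hr : r ∈ Hyp)
    (hD : det3 a r b ≠ 0) :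
    ∃ r' : V3, r' ∈ Hyp ∧ pscal a r' = pscal a r ∧ pscal r' b = pscal r b ∧
      det3 a r' b = -det3 a r b := by
  have hq1 : 1 ≤ pscal a b := pscal_ge_one ha hb
  have hq : 1 < pscal a b := by
    rcases lt_or_eq_of_le hq1 with h | h
    · exact h
    · exfalso
      have hab : a = b := eq_of_pscal_eq_one ha hb h.symm
      rw [hab] at hD
      exact hD (by rw [det3_swap23, det3_12]; ring)
  have hN : pscal (crossL a b) (crossL a b) = 1 - pscal a b ^ 2 := by
    rw [lagrange, ha.1, hb.1]; ring
  have hN0 : pscal (crossL a b) (crossL a b) ≠ 0 := by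
    rw [hN]; nlinarith
  set ν := crossL a b with hν
  set N := pscal ν ν with hNdef
  set t := 2 * pscal r ν / N with ht
  refine ⟨fun i => r i - t * ν i, ?_, ?_, ?_, ?_⟩
  · have hrr : pscal (fun i => r i - t * ν i) (fun i => r i - t * ν i)
        = pscal r r - 2 * t * pscal r ν + t ^ 2 * N := by
      simp only [pscal, hNdef]; ring
    have hmem1 : pscal (fun i => r i - t * ν i) (fun i => r i - t * ν i) = 1 := by
      rw [hrr, hr.1, ht]
      field_simp
      ring
    refine mem_hyp_of hmem1 ha ?_
    have hra : pscal (fun i => r i - t * ν i) a = pscal r a - t * pscal ν a := by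
      simp only [pscal]; ring
    have hνa : pscal ν a = 0 := by
      rw [hν, pscal_crossL, det3_aa]
    rw [hra, hνa]
    have := pscal_ge_one hr ha
    linarith
  · have hlin : pscal a (fun i => r i - t * ν i) = pscal a r - t * pscal a ν := by
      simp only [pscal]; ring
    have hνa : pscal a ν = 0 := by
      rw [pscal_comm, hν, pscal_crossL, det3_aa]
    rw [hlin, hνa]; ring
  · have hlin : pscal (fun i => r i - t * ν i) b = pscal r b - t * pscal ν b := by
      simp only [pscal]; ring
    have hνb : pscal ν b = 0 := by
      rw [hν, pscal_crossL, det3_bb]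
    rw [hlin, hνb]; ring
  · have hlin : det3 a (fun i => r i - t * ν i) b = det3 a r b - t * det3 a ν b := by
      simp only [det3]; ring
    have h1 : det3 a ν b = -N := by
      rw [det3_swap23, hNdef, hν, ← pscal_crossL]
    have h2 : pscal r ν = -det3 a r b := by
      rw [pscal_comm, hν, pscal_crossL, det3_swap23]
    rw [hlin, h1, ht, h2]
    field_simp
    ring

/- ### A telescoping sum -/

lemma tele_sum (f : ℕ → ℝ) {a b : ℕ} (h : a ≤ b) :
    ∑ k ∈ Finset.Ico a b, (f (k + 1) - f k) = f b - f a := by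
  induction b, h using Nat.le_induction with
  | base => simp
  | succ b hb ih =>
      rw [Finset.sum_Ico_succ_top hb, ih]
      ring

/- ### Choice of rotation angle -/

lemma exists_sc {A B : ℝ} (h : 0 < A ^ 2 + B ^ 2) :
    ∃ s c : ℝ, s ^ 2 + c ^ 2 = 1 ∧ c * A + s * B < 0 := by
  have hr : 0 < Real.sqrt (A ^ 2 + B ^ 2) := Real.sqrt_pos.mpr h
  have h2 : (Real.sqrt (A ^ 2 + B ^ 2)) ^ 2 = A ^ 2 + B ^ 2 := Real.sq_sqrt h.le
  refine ⟨-B / Real.sqrt (A ^ 2 + B ^ 2), -A / Real.sqrt (A ^ 2 + B ^ 2), ?_, ?_⟩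
  · field_simp
    linarith
  · have he : (-A / Real.sqrt (A ^ 2 + B ^ 2)) * A + (-B / Real.sqrt (A ^ 2 + B ^ 2)) * B
        = -((A ^ 2 + B ^ 2) / Real.sqrt (A ^ 2 + B ^ 2)) := by
      field_simp; ring
    rw [he]
    have : 0 < (A ^ 2 + B ^ 2) / Real.sqrt (A ^ 2 + B ^ 2) := div_pos h hr
    linarith

/- ### The main construction, assuming `j < m` -/

lemma main_lemma (n : ℕ) (hn : 4 ≤ n) (z : ℕ → V3)
    (hz : ∀ k ∈ Finset.Icc 1 n, z k ∈ Hyp)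
    (hpos : ∀ k ∈ Finset.Icc 1 n, 0 < dH (z k) (z (nxt n k)))
    (j m : ℕ) (h1j : 1 ≤ j) (hjm : j + 2 ≤ m) (hmn : m ≤ n)
    (hxtr : m = n → 2 ≤ j) (hcoin : z j = z m) :
    ∃ w : ℕ → V3, (∀ k ∈ Finset.Icc 1 n, w k ∈ Hyp) ∧
      (∀ k ∈ Finset.Icc 1 n, dH (w k) (w (nxt n k)) = dH (z k) (z (nxt n k))) ∧
      polyArea n z < polyArea n w := by
  have hzc : ∀ k, 1 ≤ k → k ≤ n → z k ∈ Hyp :=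
    fun k h1 h2 => hz k (Finset.mem_Icc.mpr ⟨h1, h2⟩)
  have hnxt_lt : ∀ k, k < n → nxt n k = k + 1 := fun k h => by
    unfold nxt; rw [Nat.mod_eq_of_lt h]
  have hnxt_n : nxt n n = 1 := by unfold nxt; rw [Nat.mod_self]
  have hM : (m < n ∧ nxt n m = m + 1) ∨ (m = n ∧ nxt n m = 1) := by
    rcases lt_or_eq_of_le hmn with h | h
    · exact Or.inl ⟨h, hnxt_lt m h⟩
    · exact Or.inr ⟨h, by rw [h, hnxt_n]⟩
  have hMrange : 1 ≤ nxt n m ∧ nxt n m ≤ n := by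
    rcases hM with ⟨h, h2⟩ | ⟨h, h2⟩ <;> omega
  have hbH : z 1 ∈ Hyp := hzc 1 le_rfl (by omega)
  have hpH : z m ∈ Hyp := hzc m (by omega) hmn
  have huH : z (m - 1) ∈ Hyp := hzc (m - 1) (by omega) (by omega)
  have hvH : z (nxt n m) ∈ Hyp := hzc _ hMrange.1 hMrange.2
  have hq1 : 1 < pscal (z (m - 1)) (z m) := by
    have h := hpos (m - 1) (Finset.mem_Icc.mpr ⟨by omega, by omega⟩)
    rw [hnxt_lt (m - 1) (by omega), show m - 1 + 1 = m from by omega] at h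
    exact one_lt_pscal_of_dH_pos huH hpH h
  have hq2 : 1 < pscal (z m) (z (nxt n m)) := by
    have h := hpos m (Finset.mem_Icc.mpr ⟨by omega, hmn⟩)
    exact one_lt_pscal_of_dH_pos hpH hvH h
  -- choose a rotation making the triangle at the pinch strictly negative
  have hAB : 0 < det3 (z (m - 1)) (z m) (z (nxt n m)) ^ 2
      + det3 (crossL (z m) (z (m - 1))) (z m) (z (nxt n m)) ^ 2 := by
    rw [parseval (z m) (z (m - 1)) (z (nxt n m)) hpH.1 huH.1 hvH.1]
    have h1 : 1 < pscal (z m) (z (m - 1)) := by rw [pscal_comm]; exact hq1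
    have ha1 : 0 < pscal (z m) (z (m - 1)) ^ 2 - 1 := by nlinarith
    have ha2 : 0 < pscal (z m) (z (nxt n m)) ^ 2 - 1 := by nlinarith
    exact mul_pos ha1 ha2
  obtain ⟨s, c, hsc, hscval⟩ := exists_sc hAB
  have hDneg : det3 (rotP (z m) s c (z (m - 1))) (z m) (z (nxt n m)) < 0 := by
    rw [rotP_trip _ _ _ hpH.1]
    exact hscval
  -- the rotated polygon
  set z1' : ℕ → V3 :=
    fun k => if j + 1 ≤ k ∧ k ≤ m - 1 then rotP (z m) s c (z k) else z k with hz'def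
  have hz'out : ∀ k, ¬(j + 1 ≤ k ∧ k ≤ m - 1) → z1' k = z k := by
    intro k hk; rw [hz'def]; simp only; rw [if_neg hk]
  have hz'in : ∀ k, (j + 1 ≤ k ∧ k ≤ m - 1) → z1' k = rotP (z m) s c (z k) := by
    intro k hk; rw [hz'def]; simp only; rw [if_pos hk]
  have hz'R : ∀ k, j ≤ k → k ≤ m → z1' k = rotP (z m) s c (z k) := by
    intro k h1 h2
    by_cases hk : j + 1 ≤ k ∧ k ≤ m - 1
    · exact hz'in k hk
    · have : k = j ∨ k = m := by omega
      rcases this with h | h <;> subst h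
      · rw [hz'out _ hk, hcoin, rotP_fix]
      · rw [hz'out _ hk, rotP_fix]
  have hz'mem : ∀ k ∈ Finset.Icc 1 n, z1' k ∈ Hyp := by
    intro k hk
    rw [Finset.mem_Icc] at hk
    by_cases hkin : j + 1 ≤ k ∧ k ≤ m - 1
    · rw [hz'in k hkin]
      exact rotP_mem hpH hsc (hzc k (by omega) (by omega))
    · rw [hz'out _ hkin]; exact hzc k (by omega) (by omega)
  have hz'1 : z1' 1 = z 1 := hz'out 1 (by omega)
  have hz'm : z1' m = z m := hz'out m (by omega)
  have hside1 : ∀ k ∈ Finset.Icc 1 n,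
      pscal (z1' k) (z1' (nxt n k)) = pscal (z k) (z (nxt n k)) := by
    intro k hk
    rw [Finset.mem_Icc] at hk
    by_cases hkin : j ≤ k ∧ k ≤ m - 1
    · have hklt : k < n := by omega
      rw [hnxt_lt k hklt, hz'R k (by omega) (by omega), hz'R (k + 1) (by omega) (by omega)]
      exact rotP_pscal _ hpH.1 hsc _ _
    · have h1 : z1' k = z k := hz'out k (by omega)
      have h2 : z1' (nxt n k) = z (nxt n k) := by
        rcases Nat.lt_or_ge k n with h | h
        · rw [hnxt_lt k h]; exact hz'out (k + 1) (by omega)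
        · rw [show k = n from by omega, hnxt_n]; exact hz'out 1 (by omega)
      rw [h1, h2]
  -- the rotation does not change the area
  have harea1 : polyArea n z1' = polyArea n z := by
    unfold polyArea
    rw [hz'1]
    set F : ℕ → ℝ := fun k => triArea (z 1) (z1' k) (z1' (k + 1))
      - triArea (z 1) (z k) (z (k + 1)) with hFdef
    have hsum : ∑ k ∈ Finset.Ico 2 n, triArea (z 1) (z1' k) (z1' (k + 1))
        - ∑ k ∈ Finset.Ico 2 n, triArea (z 1) (z k) (z (k + 1))
        = ∑ k ∈ Finset.Ico 2 n, F k := by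
      rw [← Finset.sum_sub_distrib]
    have hF0 : ∀ k, k ∉ Finset.Ico j m → F k = 0 := by
      intro k hk
      rw [Finset.mem_Ico] at hk
      simp only [hFdef]
      rw [hz'out k (by omega), hz'out (k + 1) (by omega)]
      ring
    have hF1 : F 1 = 0 := by
      simp only [hFdef]
      rw [hz'1, triArea_aab, triArea_aab]
      ring
    have hstep : ∑ k ∈ Finset.Ico 2 n, F k = ∑ k ∈ Finset.Ico j m, F k := by
      have e1 : ∑ k ∈ Finset.Ico 2 n, F k
          = ∑ k ∈ Finset.Ico 2 n ∪ Finset.Ico j m, F k := by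
        apply Finset.sum_subset Finset.subset_union_left
        intro x hx1 hx2
        have hx3 : x ∈ Finset.Ico j m := by
          rcases Finset.mem_union.mp hx1 with h | h
          · exact absurd h hx2
          · exact h
        rw [Finset.mem_Ico] at hx2 hx3
        have : x = 1 := by omega
        rw [this]; exact hF1
      have e2 : ∑ k ∈ Finset.Ico 2 n ∪ Finset.Ico j m, F k
          = ∑ k ∈ Finset.Ico j m, F k := by
        symm
        apply Finset.sum_subset Finset.subset_union_right
        intro x _ hx2
        exact hF0 x hx2
      rw [e1, e2]
    have hFk : ∀ k ∈ Finset.Ico j m, F k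
        = (triArea (z 1) (z m) (z1' (k + 1)) - triArea (z 1) (z m) (z1' k))
          - (triArea (z 1) (z m) (z (k + 1)) - triArea (z 1) (z m) (z k)) := by
      intro k hk
      rw [Finset.mem_Ico] at hk
      have hk1 : z k ∈ Hyp := hzc k (by omega) (by omega)
      have hk2 : z (k + 1) ∈ Hyp := hzc (k + 1) (by omega) (by omega)
      have hk1' : z1' k ∈ Hyp := hz'mem k (Finset.mem_Icc.mpr ⟨by omega, by omega⟩)
      have hk2' : z1' (k + 1) ∈ Hyp := hz'mem (k + 1) (Finset.mem_Icc.mpr ⟨by omega, by omega⟩)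
      have c1 := cocycle hbH hpH hk1 hk2
      have c2 := cocycle hbH hpH hk1' hk2'
      have hPP : triArea (z m) (z1' k) (z1' (k + 1)) = triArea (z m) (z k) (z (k + 1)) := by
        rw [hz'R k (by omega) (by omega), hz'R (k + 1) (by omega) (by omega)]
        exact triArea_rot hpH.1 hsc
      simp only [hFdef]
      linarith
    have hv1 : triArea (z 1) (z m) (z1' m) = 0 := by rw [hz'm]; exact triArea_abb _ _
    have hv2 : triArea (z 1) (z m) (z1' j) = 0 := by
      rw [hz'out j (by omega), hcoin]; exact triArea_abb _ _
    have hv3 : triArea (z 1) (z m) (z m) = 0 := triArea_abb _ _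
    have hv4 : triArea (z 1) (z m) (z j) = 0 := by rw [hcoin]; exact triArea_abb _ _
    have htot : ∑ k ∈ Finset.Ico j m, F k = 0 := by
      rw [Finset.sum_congr rfl hFk, Finset.sum_sub_distrib]
      rw [tele_sum (fun t => triArea (z 1) (z m) (z1' t)) (show j ≤ m from by omega)]
      rw [tele_sum (fun t => triArea (z 1) (z m) (z t)) (show j ≤ m from by omega)]
      rw [hv1, hv2, hv3, hv4]
      ring
    linarith [hsum, hstep, htot]
  -- the flip at the pinch vertex
  have hu'H : rotP (z m) s c (z (m - 1)) ∈ Hyp := rotP_mem hpH hsc huH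
  obtain ⟨r', hr'H, hps_ar, hps_rb, hdetneg⟩ :=
    flip_exists (rotP (z m) s c (z (m - 1))) (z (nxt n m)) (z m) hu'H hvH hpH
      (ne_of_lt hDneg)
  set w : ℕ → V3 := Function.update z1' m r' with hwdef
  have hwm : w m = r' := by rw [hwdef]; exact Function.update_self _ _ _
  have hwk : ∀ k, k ≠ m → w k = z1' k := fun k hk => by
    rw [hwdef]; exact Function.update_of_ne hk _ _
  have hwmem : ∀ k ∈ Finset.Icc 1 n, w k ∈ Hyp := by
    intro k hk
    by_cases h : k = m
    · rw [h, hwm]; exact hr'H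
    · rw [hwk k h]; exact hz'mem k hk
  have hnem : nxt n m ≠ m := by rcases hM with ⟨_, h⟩ | ⟨_, h⟩ <;> omega
  have hzM : z1' (nxt n m) = z (nxt n m) := by
    rcases hM with ⟨h1, h2⟩ | ⟨h1, h2⟩ <;> rw [h2] <;> exact hz'out _ (by omega)
  have hside2 : ∀ k ∈ Finset.Icc 1 n,
      pscal (w k) (w (nxt n k)) = pscal (z1' k) (z1' (nxt n k)) := by
    intro k hk
    rw [Finset.mem_Icc] at hk
    by_cases hk1 : k = m
    · subst hk1
      rw [hwm, hwk _ hnem, hzM, hz'm]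
      exact hps_rb
    · by_cases hk2 : k = m - 1
      · subst hk2
        rw [hnxt_lt (m - 1) (by omega), show m - 1 + 1 = m from by omega]
        rw [hwk _ (by omega), hwm, hz'm, hz'R (m - 1) (by omega) (by omega)]
        exact hps_ar
      · have hne : nxt n k ≠ m := by
          rcases Nat.lt_or_ge k n with h | h
          · rw [hnxt_lt k h]; omega
          · rw [show k = n from by omega, hnxt_n]; omega
        rw [hwk _ hk1, hwk _ hne]
  -- the flip strictly increases the area
  have harea2 : polyArea n z1' < polyArea n w := by
    unfold polyArea
    have hw1 : w 1 = z 1 := by rw [hwk 1 (by omega), hz'1]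
    rw [hw1, hz'1]
    set G : ℕ → ℝ := fun k => triArea (z 1) (w k) (w (k + 1))
      - triArea (z 1) (z1' k) (z1' (k + 1)) with hGdef
    have hsum : ∑ k ∈ Finset.Ico 2 n, triArea (z 1) (w k) (w (k + 1))
        - ∑ k ∈ Finset.Ico 2 n, triArea (z 1) (z1' k) (z1' (k + 1))
        = ∑ k ∈ Finset.Ico 2 n, G k := by
      rw [← Finset.sum_sub_distrib]
    suffices h : 0 < ∑ k ∈ Finset.Ico 2 n, G k by linarith
    rcases hM with ⟨hmlt, hMval⟩ | ⟨hmeq, hMval⟩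
    · -- m < n
      rw [hMval] at hvH hDneg hps_rb hdetneg
      have hS : ∑ k ∈ Finset.Ico 2 n, G k = ∑ k ∈ ({m - 1, m} : Finset ℕ), G k := by
        symm
        apply Finset.sum_subset
        · intro x hx
          simp only [Finset.mem_insert, Finset.mem_singleton] at hx
          rw [Finset.mem_Ico]; omega
        · intro x hx1 hx2
          simp only [Finset.mem_insert, Finset.mem_singleton] at hx2
          push_neg at hx2
          simp only [hGdef]
          rw [hwk x hx2.2, hwk (x + 1) (by omega)]
          ring
      rw [hS, Finset.sum_pair (show m - 1 ≠ m from by omega)]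
      have e1 : w (m - 1) = rotP (z m) s c (z (m - 1)) := by
        rw [hwk _ (by omega)]; exact hz'R (m - 1) (by omega) (by omega)
      have e3 : w (m + 1) = z (m + 1) := by
        rw [hwk _ (by omega)]; exact hz'out _ (by omega)
      have e4 : z1' (m - 1) = rotP (z m) s c (z (m - 1)) :=
        hz'R (m - 1) (by omega) (by omega)
      have e6 : z1' (m + 1) = z (m + 1) := hz'out _ (by omega)
      have c1 := cocycle hbH hu'H hr'H hvH
      have c2 := cocycle hbH hu'H hpH hvH
      have hflip : triArea (rotP (z m) s c (z (m - 1))) r' (z (m + 1))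
          = -triArea (rotP (z m) s c (z (m - 1))) (z m) (z (m + 1)) :=
        triArea_flip2 hps_ar hps_rb hdetneg
      have hneg : triArea (rotP (z m) s c (z (m - 1))) (z m) (z (m + 1)) < 0 :=
        triArea_neg_of hu'H hpH hvH hDneg
      simp only [hGdef]
      rw [show m - 1 + 1 = m from by omega, e1, hwm, e3, e4, hz'm, e6]
      linarith
    · -- m = n
      rw [hMval] at hvH hDneg hps_rb hdetneg
      have hS : ∑ k ∈ Finset.Ico 2 n, G k = ∑ k ∈ ({m - 1} : Finset ℕ), G k := by
        symm
        apply Finset.sum_subset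
        · intro x hx
          simp only [Finset.mem_singleton] at hx
          rw [Finset.mem_Ico]; omega
        · intro x hx1 hx2
          simp only [Finset.mem_singleton] at hx2
          rw [Finset.mem_Ico] at hx1
          simp only [hGdef]
          rw [hwk x (by omega), hwk (x + 1) (by omega)]
          ring
      rw [hS, Finset.sum_singleton]
      have e1 : w (m - 1) = rotP (z m) s c (z (m - 1)) := by
        rw [hwk _ (by omega)]; exact hz'R (m - 1) (by omega) (by omega)
      have e4 : z1' (m - 1) = rotP (z m) s c (z (m - 1)) :=
        hz'R (m - 1) (by omega) (by omega)
      have hdet' : det3 (z 1) (rotP (z m) s c (z (m - 1))) r'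
          = -det3 (z 1) (rotP (z m) s c (z (m - 1))) (z m) := by
        rw [det3_cyc (z 1) (rotP (z m) s c (z (m - 1))) r', hdetneg,
          ← det3_cyc (z 1) (rotP (z m) s c (z (m - 1))) (z m)]
      have hflip : triArea (z 1) (rotP (z m) s c (z (m - 1))) r'
          = -triArea (z 1) (rotP (z m) s c (z (m - 1))) (z m) :=
        triArea_flip3 hps_ar hps_rb hdet'
      have hneg : triArea (z 1) (rotP (z m) s c (z (m - 1))) (z m) < 0 := by
        rw [triArea_cyc]
        exact triArea_neg_of hu'H hpH hbH hDneg
      simp only [hGdef]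
      rw [show m - 1 + 1 = m from by omega, e1, hwm, e4, hz'm]
      linarith
  refine ⟨w, hwmem, ?_, ?_⟩
  · intro k hk
    exact dH_congr ((hside2 k hk).trans (hside1 k hk))
  · rw [← harea1]; exact harea2

/- ### The theorem -/

/-- Lemma 4.1: an `n`-gon in which two non-adjacent vertices coincide can always be
enlarged keeping the sidelengths. -/
theorem enlarge_if_coincident_vertices (n : ℕ) (hn : 4 ≤ n) (z : ℕ → V3)
    (hz : ∀ k ∈ Finset.Icc 1 n, z k ∈ Hyp)
    (hpos : ∀ k ∈ Finset.Icc 1 n, 0 < dH (z k) (z (nxt n k)))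
    (j m : ℕ) (hj : j ∈ Finset.Icc 1 n) (hm : m ∈ Finset.Icc 1 n)
    (hjm : j ≠ m) (hadj1 : m ≠ nxt n j) (hadj2 : j ≠ nxt n m)
    (hcoin : z j = z m) :
    ∃ w : ℕ → V3, (∀ k ∈ Finset.Icc 1 n, w k ∈ Hyp) ∧
      (∀ k ∈ Finset.Icc 1 n, dH (w k) (w (nxt n k)) = dH (z k) (z (nxt n k))) ∧
      polyArea n z < polyArea n w := by
  rw [Finset.mem_Icc] at hj hm
  have hnxt_lt : ∀ k, k < n → nxt n k = k + 1 := fun k h => by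
    unfold nxt; rw [Nat.mod_eq_of_lt h]
  have hnxt_n : nxt n n = 1 := by unfold nxt; rw [Nat.mod_self]
  rcases lt_trichotomy j m with h | h | h
  · -- j < m
    have hne1 : m ≠ j + 1 := by
      rw [hnxt_lt j (by omega)] at hadj1; exact hadj1
    have hxtr : m = n → 2 ≤ j := by
      intro hmeq
      rw [hmeq, hnxt_n] at hadj2
      omega
    exact main_lemma n hn z hz hpos j m (by omega) (by omega) (by omega) hxtr hcoin
  · exact absurd h hjm
  · -- m < j
    have hne1 : j ≠ m + 1 := by
      rw [hnxt_lt m (by omega)] at hadj2; exact hadj2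
    have hxtr : j = n → 2 ≤ m := by
      intro hjeq
      rw [hjeq, hnxt_n] at hadj1
      omega
    exact main_lemma n hn z hz hpos m j (by omega) (by omega) (by omega) hxtr hcoin.symm
end
end

section
/- Maximal two-sided triangles have cocyclic parallelogram completion: fix L₁, L₂ > 0 and let z₁,z₂,z₃ ∈ ℍ with [z₁,z₂,z₃] > 0, d(z₁,z₂) = L₁, d(z₂,z₃) = L₂, such that F(z₁,z₂,z₃) ≥ F(w₁,w₂,w₃) for every triple w₁,w₂,w₃ ∈ ℍ with d(w₁,w₂) = L₁ and d(w₂,w₃) = L₂ (the third sidelength is free). Let z₄ ∈ ℍ be the parallelogram completion point: d(z₃,z₄) = L₁, d(z₁,z₄) = L₂, and z₄ on the opposite side of the line through z₁ and z₃ from z₂, i.e. [z₁,z₃,z₂]·[z₁,z₃,z₄] < 0. Then z₁, z₂, z₃, z₄ are cocyclic. -/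
open Real Finset

noncomputable section

/-!
Put `z₂` at the apex of the hyperboloid. The triangles with sides `L₁, L₂` meeting at `z₂`
form a hinge with opening angle `θ`, and `tan (F/2) = K sin θ / (S - K cos θ)` with
`K = sinh L₁ sinh L₂`, `S = (1 + cosh L₁)(1 + cosh L₂)`. This is maximal exactly when
`S cos θ = K`, which in terms of scalar products reads
`⟨z₁,z₃⟩ = ⟨z₁,z₂⟩ + ⟨z₂,z₃⟩ - 1`. That identity says that `z₁ + z₃ - z₂` has the
scalar products of `z₄` with `z₁` and `z₃`, and Gram's identity puts it on the same side of
the line `z₁z₃` as `z₄`; hence it is `z₄`. Being an affine combination of `z₁, z₂, z₃`, it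
lies in their plane, which misses the origin because `[z₁,z₂,z₃] ≠ 0`.
-/

lemma pscal_comm_s13 (x y : V3) : pscal x y = pscal y x := by
  unfold pscal; ring

lemma det3_sq (x y z : V3) : det3 x y z ^ 2 =
    pscal x x * pscal y y * pscal z z + 2 * pscal x y * pscal y z * pscal x z
      - pscal x x * pscal y z ^ 2 - pscal y y * pscal x z ^ 2 - pscal z z * pscal x y ^ 2 := by
  unfold det3 pscal; ring

lemma det3_sq_of_mem_Hyp {x y z : V3} (hx : x ∈ Hyp) (hy : y ∈ Hyp) (hz : z ∈ Hyp) :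
    det3 x y z ^ 2 = 1 + 2 * pscal x y * pscal y z * pscal x z
      - pscal y z ^ 2 - pscal x z ^ 2 - pscal x y ^ 2 := by
  rw [det3_sq, hx.1, hy.1, hz.1]; ring

lemma lagrange_identity_of_mem_Hyp {x y : V3} (hx : x ∈ Hyp) (hy : y ∈ Hyp) :
    (x 0 * y 0 - 1) ^ 2 =
      (x 1 * y 1 + x 2 * y 2) ^ 2 + (x 1 * y 2 - x 2 * y 1) ^ 2 + (x 0 - y 0) ^ 2 := by
  unfold Hyp pscal at hx hy
  linear_combination (x 1 * x 1 + x 2 * x 2) * hy.1 + (y 0 * y 0 - 1) * hx.1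

lemma one_le_pscal {x y : V3} (hx : x ∈ Hyp) (hy : y ∈ Hyp) : 1 ≤ pscal x y := by
  have key := lagrange_identity_of_mem_Hyp hx hy
  obtain ⟨hx1, hx0⟩ := hx
  obtain ⟨hy1, hy0⟩ := hy
  unfold pscal at *
  have hx01 : 1 ≤ x 0 := by nlinarith [sq_nonneg (x 1), sq_nonneg (x 2)]
  have hy01 : 1 ≤ y 0 := by nlinarith [sq_nonneg (y 1), sq_nonneg (y 2)]
  have hP : 0 ≤ x 0 * y 0 - 1 := by nlinarith
  nlinarith [sq_nonneg (x 0 * y 0 - 1 + (x 1 * y 1 + x 2 * y 2))]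

lemma eq_of_pscal_eq_one_s13 {x y : V3} (hx : x ∈ Hyp) (hy : y ∈ Hyp) (h : pscal x y = 1) :
    x = y := by
  have key := lagrange_identity_of_mem_Hyp hx hy
  obtain ⟨hx1, -⟩ := hx
  obtain ⟨hy1, -⟩ := hy
  unfold pscal at *
  have h0 : x 0 = y 0 := by nlinarith [sq_nonneg (x 1 * y 2 - x 2 * y 1), sq_nonneg (x 0 - y 0)]
  have hsp : (x 1 - y 1) ^ 2 + (x 2 - y 2) ^ 2 = 0 := by
    rw [← h0] at hy1 h; linear_combination -hx1 - hy1 + 2 * h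
  have h1 : x 1 = y 1 := by nlinarith [sq_nonneg (x 1 - y 1), sq_nonneg (x 2 - y 2)]
  have h2 : x 2 = y 2 := by nlinarith [sq_nonneg (x 1 - y 1), sq_nonneg (x 2 - y 2)]
  ext i; fin_cases i <;> assumption

lemma pscal_eq_cosh_of_dH_eq {x y : V3} {L : ℝ} (hx : x ∈ Hyp) (hy : y ∈ Hyp)
    (h : dH x y = L) : pscal x y = cosh L := by
  rw [← h]; exact (cosh_arcosh (one_le_pscal hx hy)).symm

lemma dH_nonneg {x y : V3} (hx : x ∈ Hyp) (hy : y ∈ Hyp) : 0 ≤ dH x y :=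
  arcosh_nonneg (one_le_pscal hx hy)

lemma dH_eq_of_pscal_eq_cosh {x y : V3} {L : ℝ} (hL : 0 ≤ L) (h : pscal x y = cosh L) :
    dH x y = L := by
  rw [dH, h]; exact arcosh_cosh hL

/-- `J (u × v)` with `J = diag(1, -1, -1)`. -/
def ncross (u v : V3) : V3 := ![u 1 * v 2 - u 2 * v 1, u 0 * v 2 - u 2 * v 0, u 1 * v 0 - u 0 * v 1]

lemma pscal_ncross (u v w : V3) : pscal (ncross u v) w = det3 u v w := by
  simp only [pscal, ncross, det3, Matrix.cons_val]; ring

lemma pscal_ncross_self (u v : V3) :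
    pscal (ncross u v) (ncross u v) = pscal u u * pscal v v - pscal u v ^ 2 := by
  simp only [pscal, ncross, Matrix.cons_val]; ring

lemma det3_smul_eq (u v w x : V3) : det3 u v w • x =
    pscal u x • ncross v w + pscal v x • ncross w u + pscal w x • ncross u v := by
  ext i
  simp only [pscal, ncross, det3, Pi.add_apply, Pi.smul_apply, smul_eq_mul]
  fin_cases i <;> simp only [Fin.zero_eta, Fin.mk_one, Fin.reduceFinMk, Matrix.cons_val] <;> ring

lemma eq_of_pscal_eq {u v w x y : V3} (hdet : det3 u v w ≠ 0) (hu : pscal u x = pscal u y)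
    (hv : pscal v x = pscal v y) (hw : pscal w x = pscal w y) : x = y :=
  smul_right_injective V3 hdet (by simp only [det3_smul_eq, hu, hv, hw])

lemma eq_of_pscal_eq_of_det3_eq {u v x y : V3} (huv : pscal u v ^ 2 ≠ pscal u u * pscal v v)
    (hu : pscal u x = pscal u y) (hv : pscal v x = pscal v y) (hd : det3 u v x = det3 u v y) :
    x = y := by
  refine eq_of_pscal_eq (w := ncross u v) ?_ hu hv (by rwa [pscal_ncross, pscal_ncross])
  rw [← pscal_ncross, pscal_ncross_self]
  exact sub_ne_zero.mpr huv.symm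

lemma cocyc_parallelogram {x y z : V3} (h : det3 x y z ≠ 0) : Cocyc {x, y, z, x + z - y} := by
  refine ⟨ncross (y - x) (z - x), det3 x y z, fun h0 => h ?_, h, ?_⟩
  · have e := pscal_ncross (y - x) (z - x) x
    simp only [h0, pscal, det3, Pi.zero_apply, Pi.sub_apply] at e ⊢
    linear_combination -e
  · simp only [Set.mem_insert_iff, Set.mem_singleton_iff]
    rintro w (rfl | rfl | rfl | rfl) <;>
      simp only [pscal_ncross, det3, Pi.sub_apply, Pi.add_apply] <;> ring

/-- The tangent of half the area of a hinge triangle is `Y / (S - X)`; its maximum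
`K / √(S² - K²)` is attained only at `S * X = K²`, because
`K² (S - X)² - (S² - K²) Y² = (S X - K²)²`. -/
lemma mul_eq_sq_of_div_sqrt_le_div {K S X Y : ℝ} (hK : 0 ≤ K) (hKS : K < S)
    (hXY : X ^ 2 + Y ^ 2 = K ^ 2) (h : K / √(S ^ 2 - K ^ 2) ≤ Y / (S - X)) : S * X = K ^ 2 := by
  have hM : 0 < √(S ^ 2 - K ^ 2) := sqrt_pos.2 (by nlinarith)
  have hM2 : √(S ^ 2 - K ^ 2) ^ 2 = S ^ 2 - K ^ 2 := sq_sqrt (by nlinarith)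
  have hXK : X ≤ K := abs_le_of_sq_le_sq' (by nlinarith) hK |>.2
  have hSX : 0 < S - X := by linarith
  rw [div_le_div_iff₀ hM hSX] at h
  have hsq : (K * (S - X)) ^ 2 ≤ (Y * √(S ^ 2 - K ^ 2)) ^ 2 :=
    pow_le_pow_left₀ (mul_nonneg hK hSX.le) h 2
  have hid : (K * (S - X)) ^ 2 - (Y * √(S ^ 2 - K ^ 2)) ^ 2 = (S * X - K ^ 2) ^ 2 := by
    rw [mul_pow Y, hM2]; linear_combination (K ^ 2 - S ^ 2) * hXY
  nlinarith [sq_nonneg (S * X - K ^ 2)]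

def apex : V3 := ![1, 0, 0]

/-- Polar coordinates around `apex`: the point at distance `L` in the unit direction `(p, q)`. -/
def hypPoint (L p q : ℝ) : V3 := ![cosh L, sinh L * p, sinh L * q]

lemma apex_mem : apex ∈ Hyp := by
  simp [apex, Hyp, pscal]

lemma hypPoint_mem (L : ℝ) {p q : ℝ} (hpq : p ^ 2 + q ^ 2 = 1) : hypPoint L p q ∈ Hyp := by
  refine ⟨?_, by simpa [hypPoint] using cosh_pos L⟩
  simp only [pscal, hypPoint, Matrix.cons_val]
  linear_combination -sinh L ^ 2 * hpq + cosh_sq' L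

lemma dH_apex_hypPoint {L : ℝ} (hL : 0 ≤ L) (p q : ℝ) : dH apex (hypPoint L p q) = L :=
  dH_eq_of_pscal_eq_cosh hL (by simp [pscal, apex, hypPoint])

lemma dH_hypPoint_apex {L : ℝ} (hL : 0 ≤ L) (p q : ℝ) : dH (hypPoint L p q) apex = L := by
  rw [dH, pscal_comm_s13]; exact dH_apex_hypPoint hL p q

lemma triArea_hinge (L1 L2 p q : ℝ) :
    triArea (hypPoint L1 1 0) apex (hypPoint L2 p (-q)) = 2 * arctan (sinh L1 * sinh L2 * q /
      ((1 + cosh L1) * (1 + cosh L2) - sinh L1 * sinh L2 * p)) := by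
  simp only [triArea, det3, pscal, hypPoint, apex, Matrix.cons_val]
  congr 2; ring_nf

lemma sinh_mul_sinh_lt {L1 L2 : ℝ} (hL1 : 0 ≤ L1) (hL2 : 0 ≤ L2) :
    sinh L1 * sinh L2 < (1 + cosh L1) * (1 + cosh L2) :=
  mul_lt_mul'' (by linarith [sinh_lt_cosh L1]) (by linarith [sinh_lt_cosh L2])
    (sinh_nonneg_iff.2 hL1) (sinh_nonneg_iff.2 hL2)

lemma exists_triArea_eq_arctan {L1 L2 K S : ℝ} (hL1 : 0 ≤ L1) (hL2 : 0 ≤ L2)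
    (hK : sinh L1 * sinh L2 = K) (hS : (1 + cosh L1) * (1 + cosh L2) = S) :
    ∃ w1 w2 w3 : V3, w1 ∈ Hyp ∧ w2 ∈ Hyp ∧ w3 ∈ Hyp ∧
      dH w1 w2 = L1 ∧ dH w2 w3 = L2 ∧ triArea w1 w2 w3 = 2 * arctan (K / √(S ^ 2 - K ^ 2)) := by
  have hK0 : 0 ≤ K := hK ▸ mul_nonneg (sinh_nonneg_iff.2 hL1) (sinh_nonneg_iff.2 hL2)
  have hKS : K < S := hK ▸ hS ▸ sinh_mul_sinh_lt hL1 hL2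
  set M := √(S ^ 2 - K ^ 2)
  have hM : 0 < M := sqrt_pos.2 (by nlinarith)
  have hM2 : M ^ 2 = S ^ 2 - K ^ 2 := sq_sqrt (by nlinarith)
  have hS0 : S ≠ 0 := (hK0.trans_lt hKS).ne'
  -- the hinge of largest area has `cos θ = K / S`
  have hpq : (K / S) ^ 2 + (-(M / S)) ^ 2 = 1 := by field_simp; linarith
  refine ⟨hypPoint L1 1 0, apex, hypPoint L2 (K / S) (-(M / S)), hypPoint_mem L1 (by norm_num),
    apex_mem, hypPoint_mem L2 hpq, dH_hypPoint_apex hL1 1 0, dH_apex_hypPoint hL2 _ _, ?_⟩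
  rw [triArea_hinge, hK, hS, show S - K * (K / S) = M ^ 2 / S by field_simp; linarith]
  field_simp

lemma pscal_eq_of_triArea_maximal {L1 L2 : ℝ} {z1 z2 z3 : V3}
    (h1 : z1 ∈ Hyp) (h2 : z2 ∈ Hyp) (h3 : z3 ∈ Hyp)
    (hd1 : dH z1 z2 = L1) (hd2 : dH z2 z3 = L2)
    (hmax : ∀ w1 w2 w3 : V3, w1 ∈ Hyp → w2 ∈ Hyp → w3 ∈ Hyp →
      dH w1 w2 = L1 → dH w2 w3 = L2 → triArea w1 w2 w3 ≤ triArea z1 z2 z3) :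
    pscal z1 z3 = pscal z1 z2 + pscal z2 z3 - 1 := by
  have ha := pscal_eq_cosh_of_dH_eq h1 h2 hd1
  have hb := pscal_eq_cosh_of_dH_eq h2 h3 hd2
  have hL1 : 0 ≤ L1 := hd1 ▸ dH_nonneg h1 h2
  have hL2 : 0 ≤ L2 := hd2 ▸ dH_nonneg h2 h3
  set K := sinh L1 * sinh L2 with hK
  set S := (1 + cosh L1) * (1 + cosh L2) with hS
  obtain ⟨w1, w2, w3, hw1, hw2, hw3, hdw1, hdw2, harea⟩ :=
    exists_triArea_eq_arctan hL1 hL2 hK.symm hS.symm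
  have hcmp := hmax w1 w2 w3 hw1 hw2 hw3 hdw1 hdw2
  rw [harea, triArea, mul_le_mul_iff_right₀ two_pos, arctan_le_arctan_iff, pscal_comm_s13 z3 z1,
    show pscal z1 z2 + pscal z2 z3 + pscal z1 z3 + 1 =
      S - (pscal z1 z2 * pscal z2 z3 - pscal z1 z3) by rw [ha, hb]; ring] at hcmp
  have hXY : (pscal z1 z2 * pscal z2 z3 - pscal z1 z3) ^ 2 + det3 z1 z2 z3 ^ 2 = K ^ 2 := by
    rw [det3_sq_of_mem_Hyp h1 h2 h3, ha, hb, mul_pow]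
    linear_combination (cosh L2 ^ 2 - 1) * cosh_sq' L1 + sinh L1 ^ 2 * cosh_sq' L2
  have hcrit := mul_eq_sq_of_div_sqrt_le_div
    (mul_nonneg (sinh_nonneg_iff.2 hL1) (sinh_nonneg_iff.2 hL2)) (sinh_mul_sinh_lt hL1 hL2) hXY hcmp
  rw [ha, hb] at hcrit ⊢
  have hfac : S * (cosh L1 + cosh L2 - 1 - pscal z1 z3) = 0 := by
    linear_combination hcrit - (cosh L2 ^ 2 - 1) * cosh_sq' L1 - sinh L1 ^ 2 * cosh_sq' L2
  have hS0 : S ≠ 0 := by positivity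
  linarith [(mul_eq_zero.1 hfac).resolve_left hS0]

lemma pscal_add_sub (x u v w : V3) : pscal x (u + v - w) = pscal x u + pscal x v - pscal x w := by
  simp only [pscal, Pi.add_apply, Pi.sub_apply]; ring

lemma eq_parallelogram_of_pscal_eq {z1 z2 z3 z4 : V3} (h1 : z1 ∈ Hyp) (h2 : z2 ∈ Hyp)
    (h3 : z3 ∈ Hyp) (h4 : z4 ∈ Hyp) (hc : pscal z1 z3 = pscal z1 z2 + pscal z2 z3 - 1)
    (h34 : pscal z3 z4 = pscal z1 z2) (h14 : pscal z1 z4 = pscal z2 z3)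
    (hside : det3 z1 z3 z2 * det3 z1 z3 z4 < 0) : z4 = z1 + z3 - z2 := by
  have hsq : det3 z1 z3 z4 ^ 2 = det3 z1 z3 z2 ^ 2 := by
    rw [det3_sq_of_mem_Hyp h1 h3 h4, det3_sq_of_mem_Hyp h1 h3 h2, h34, h14, pscal_comm_s13 z3 z2]
    ring
  have hdet : det3 z1 z3 z4 = -det3 z1 z3 z2 := by
    rcases sq_eq_sq_iff_eq_or_eq_neg.1 hsq with h | h
    · nlinarith [sq_nonneg (det3 z1 z3 z2)]
    · exact h
  have h13 : pscal z1 z3 ≠ 1 := fun h => by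
    rw [eq_of_pscal_eq_one_s13 h1 h3 h, show det3 z3 z3 z2 = 0 by unfold det3; ring, zero_mul] at hside
    exact hside.false
  refine eq_of_pscal_eq_of_det3_eq (u := z1) (v := z3) ?_ ?_ ?_ ?_
  · rw [h1.1, h3.1, one_mul, Ne, sq_eq_one_iff, not_or]
    exact ⟨h13, by linarith [one_le_pscal h1 h3]⟩
  · rw [pscal_add_sub, h1.1, hc, h14]; ring
  · rw [pscal_add_sub, h3.1, pscal_comm_s13 z3 z1, pscal_comm_s13 z3 z2, hc, h34]; ring
  · rw [hdet]; simp only [det3, Pi.add_apply, Pi.sub_apply]; ring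

theorem maximal_two_sided_triangle_cocyclic_completion_general (L1 L2 : ℝ)
    (z1 z2 z3 z4 : V3)
    (h1 : z1 ∈ Hyp) (h2 : z2 ∈ Hyp) (h3 : z3 ∈ Hyp) (h4 : z4 ∈ Hyp)
    (hd1 : dH z1 z2 = L1) (hd2 : dH z2 z3 = L2)
    (hmax : ∀ w1 w2 w3 : V3, w1 ∈ Hyp → w2 ∈ Hyp → w3 ∈ Hyp →
      dH w1 w2 = L1 → dH w2 w3 = L2 → triArea w1 w2 w3 ≤ triArea z1 z2 z3)
    (hd3 : dH z3 z4 = L1) (hd4 : dH z1 z4 = L2)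
    (hside : det3 z1 z3 z2 * det3 z1 z3 z4 < 0) :
    Cocyc {z1, z2, z3, z4} := by
  have hc := pscal_eq_of_triArea_maximal h1 h2 h3 hd1 hd2 hmax
  have h34 : pscal z3 z4 = pscal z1 z2 := by
    rw [pscal_eq_cosh_of_dH_eq h3 h4 hd3, pscal_eq_cosh_of_dH_eq h1 h2 hd1]
  have h14 : pscal z1 z4 = pscal z2 z3 := by
    rw [pscal_eq_cosh_of_dH_eq h1 h4 hd4, pscal_eq_cosh_of_dH_eq h2 h3 hd2]
  rw [eq_parallelogram_of_pscal_eq h1 h2 h3 h4 hc h34 h14 hside]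
  refine cocyc_parallelogram fun h => ?_
  rw [show det3 z1 z3 z2 = -det3 z1 z2 z3 by unfold det3; ring, h, neg_zero, zero_mul] at hside
  exact hside.false

/-- Lemma 4.2: if an oriented triangle with two fixed sidelengths `L₁, L₂` (third side
free) has maximal area, then its parallelogram completion is cocyclic. -/
theorem maximal_two_sided_triangle_cocyclic_completion (L1 L2 : ℝ)
    (hL1 : 0 < L1) (hL2 : 0 < L2)
    (z1 z2 z3 z4 : V3)
    (h1 : z1 ∈ Hyp) (h2 : z2 ∈ Hyp) (h3 : z3 ∈ Hyp) (h4 : z4 ∈ Hyp)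
    (hor : 0 < det3 z1 z2 z3)
    (hd1 : dH z1 z2 = L1) (hd2 : dH z2 z3 = L2)
    (hmax : ∀ w1 w2 w3 : V3, w1 ∈ Hyp → w2 ∈ Hyp → w3 ∈ Hyp →
      dH w1 w2 = L1 → dH w2 w3 = L2 → triArea w1 w2 w3 ≤ triArea z1 z2 z3)
    (hd3 : dH z3 z4 = L1) (hd4 : dH z1 z4 = L2)
    (hside : det3 z1 z3 z2 * det3 z1 z3 z4 < 0) :
    Cocyc {z1, z2, z3, z4} :=
  maximal_two_sided_triangle_cocyclic_completion_general L1 L2 z1 z2 z3 z4 h1 h2 h3 h4 hd1 hd2 hmax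
    hd3 hd4 hside
end
end

section
/- Reduction lemma: for n ≥ 3 let z₁,…,z_{n+1} ∈ ℍ be given. If for every k ∈ {1,…,n+1} the n points z₁,…,ẑ_k,…,z_{n+1} (z_k omitted, in the induced cyclic order) form an oriented-convex n-gon, then z₁,…,z_{n+1} form an oriented-convex (n+1)-gon. -/
open Real Finset

noncomputable section

/-- Lemma 4.7 (reduction lemma): if every `n`-subpolygon (one vertex omitted, induced
cyclic order) of an `(n+1)`-gon is oriented-convex, then so is the `(n+1)`-gon. -/
theorem reduction_lemma (n : ℕ) (hn : 3 ≤ n) (z : ℕ → V3)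
    (hz : ∀ k ∈ Finset.Icc 1 (n + 1), z k ∈ Hyp)
    (hconv : ∀ k ∈ Finset.Icc 1 (n + 1),
      OrientedConvex n (fun j => if j < k then z j else z (j + 1))) :
    OrientedConvex (n + 1) z := by
  intro k hk j hj hjk hjk'
  rw [Finset.mem_Icc] at hk hj
  have hK' : nxt (n + 1) k = if k = n + 1 then 1 else k + 1 := by
    rw [nxt]
    split
    · rename_i h; rw [h, Nat.mod_self]
    · rw [Nat.mod_eq_of_lt (by omega)]
  rw [hK'] at hjk' ⊢
  set k' : ℕ := if k = n + 1 then 1 else k + 1 with hk'def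
  have hk'mem : 1 ≤ k' ∧ k' ≤ n + 1 := by rw [hk'def]; split <;> omega
  obtain ⟨m, hm, hmne⟩ : ∃ m ∈ Finset.Icc 1 (n + 1), m ∉ ({k, k', j} : Finset ℕ) := by
    by_contra hcon
    push_neg at hcon
    have hsub : Finset.Icc 1 (n + 1) ⊆ ({k, k', j} : Finset ℕ) := fun x hx => hcon x hx
    have hcard := Finset.card_le_card hsub
    have h1 : ({k, k', j} : Finset ℕ).card ≤ 3 := by
      apply le_trans (Finset.card_insert_le _ _)
      have h2 := Finset.card_insert_le k' ({j} : Finset ℕ)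
      simp only [Finset.card_singleton] at h2 ⊢
      omega
    rw [Nat.card_Icc] at hcard
    omega
  simp only [Finset.mem_insert, Finset.mem_singleton, not_or] at hmne
  obtain ⟨hmk, hmk', hmj⟩ := hmne
  rw [Finset.mem_Icc] at hm
  set A : ℕ := if k < m then k else k - 1 with hAdef
  set B : ℕ := if j < m then j else j - 1 with hBdef
  have hkk' : k ≠ k' := by rw [hk'def]; split <;> omega
  have hNA : nxt n A = if k' < m then k' else k' - 1 := by
    rw [nxt, hAdef, hk'def]
    by_cases hk1 : k = n + 1
    · rw [if_neg (by omega), if_pos hk1]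
      have h3 : k - 1 = n := by omega
      rw [h3, Nat.mod_self, if_pos (by rw [hk'def, if_pos hk1] at hk'mem hmk'; omega)]
    · rw [if_neg hk1]
      have hmk1 : m ≠ k + 1 := by rw [hk'def, if_neg hk1] at hmk'; omega
      by_cases h2 : k + 1 < m
      · rw [if_pos (by omega), Nat.mod_eq_of_lt (by omega), if_pos h2]
      · have hkm : m < k := by omega
        rw [if_neg (by omega), Nat.mod_eq_of_lt (by omega), if_neg h2]
        omega
  have hAmem : A ∈ Finset.Icc 1 n := by
    rw [Finset.mem_Icc, hAdef]; split <;> omega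
  have hBmem : B ∈ Finset.Icc 1 n := by
    rw [Finset.mem_Icc, hBdef]; split <;> omega
  have hBA : B ≠ A := by
    rw [hAdef, hBdef]; split <;> split <;> omega
  have hBnA : B ≠ nxt n A := by
    rw [hNA, hBdef]
    have hjK' : j ≠ k' := hjk'
    split <;> split <;> omega
  have H := hconv m (Finset.mem_Icc.mpr ⟨hm.1, hm.2⟩) A hAmem B hBmem hBA hBnA
  simp only at H
  have e1 : (if A < m then z A else z (A + 1)) = z k := by
    rw [hAdef]
    by_cases h : k < m
    · rw [if_pos h, if_pos h]
    · rw [if_neg h, if_neg (by omega)]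
      have hx : k - 1 + 1 = k := by omega
      rw [hx]
  have e2 : (if nxt n A < m then z (nxt n A) else z (nxt n A + 1)) = z k' := by
    rw [hNA]
    by_cases h : k' < m
    · rw [if_pos h, if_pos h]
    · rw [if_neg h, if_neg (by omega)]
      have hx : k' - 1 + 1 = k' := by omega
      rw [hx]
  have e3 : (if B < m then z B else z (B + 1)) = z j := by
    rw [hBdef]
    by_cases h : j < m
    · rw [if_pos h, if_pos h]
    · rw [if_neg h, if_neg (by omega)]
      have hx : j - 1 + 1 = j := by omega
      rw [hx]
  rw [e1, e2, e3] at H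
  exact H
end
end
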